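/- arXiv:math/0209173 — 12 statements merged into one kernel-verified Lean document; each statement's English description precedes it below -/
import Mathlib

section
/- Let A = (A_{ij}) be a 3×3 matrix of integers. Consider the action of the torus Circle³ on (S³)³ given by (λ₁,λ₂,λ₃)·((u₁,v₁),(u₂,v₂),(u₃,v₃)) = ((λ₁u₁, λ₁^{A₁₁}λ₂^{A₁₂}λ₃^{A₁₃}·v₁), (λ₂u₂, λ₁^{A₂₁}λ₂^{A₂₂}λ₃^{A₂₃}·v₂), (λ₃u₃, λ₁^{A₃₁}λ₂^{A₃₂}λ₃^{A₃₃}·v₃)). Then this action is free — that is, for all λ₁,λ₂,λ₃ ∈ ℂ with |λᵢ| = 1 and all (u₁,v₁),(u₂,v₂),(u₃,v₃) ∈ ℂ² with |uᵢ|² + |vᵢ|² = 1 for i = 1,2,3, if λᵢuᵢ = uᵢ and λ₁^{A_{i1}}λ₂^{A_{i2}}λ₃^{A_{i3}}·vᵢ = vᵢ for all i, then λ₁ = λ₂ = λ₃ = 1 — if and only if the diagonal entries A₁₁, A₂₂, A₃₃ are each ±1, the three 2×2 minors A₂₂A₃₃ − A₂₃A₃₂, A₁₁A₃₃ − A₁₃A₃₁,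 A₁₁A₂₂ − A₁₂A₂₁ are each ±1, and det A = ±1. -/
section grp
variable {G : Type*} [CommGroup G]

lemma lin2 {M : Type*} [AddCommGroup M] (X Y : M) (a b c d : ℤ)
    (h1 : a•X + b•Y = 0) (h2 : c•X + d•Y = 0) : (a*d - b*c) • X = 0 := by
  calc (a*d - b*c) • X = d • (a•X + b•Y) + (-b) • (c•X + d•Y) := by module
  _ = 0 := by rw [h1, h2]; simp

lemma lin3 {M : Type*} [AddCommGroup M] (X Y Z : M) (a b c d e f g h i : ℤ)
    (h1 : a•X + b•Y + c•Z = 0) (h2 : d•X + e•Y + f•Z = 0) (h3 : g•X + h•Y + i•Z = 0) :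
    (a*e*i - a*f*h - b*d*i + b*f*g + c*d*h - c*e*g) • X = 0 := by
  calc (a*e*i - a*f*h - b*d*i + b*f*g + c*d*h - c*e*g) • X
      = (e*i - f*h) • (a•X + b•Y + c•Z) + (c*h - b*i) • (d•X + e•Y + f•Z)
        + (b*f - c*e) • (g•X + h•Y + i•Z) := by module
  _ = 0 := by rw [h1, h2, h3]; simp

lemma pm_one_pow (x : G) (a : ℤ) (ha : a = 1 ∨ a = -1) (h : x ^ a = 1) : x = 1 := by
  rcases ha with h' | h' <;> subst h' <;> simpa using h

lemma det1x (x : G) (a : ℤ) (ha : a = 1 ∨ a = -1) (h : x ^ a = 1) : x = 1 :=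
  pm_one_pow x a ha h

lemma det2x (x y : G) (a b c d : ℤ) (h1 : x^a * y^b = 1) (h2 : x^c * y^d = 1)
    (hd : a*d - b*c = 1 ∨ a*d - b*c = -1) : x = 1 := by
  have h1' : a • Additive.ofMul x + b • Additive.ofMul y = 0 := by
    rw [← ofMul_zpow, ← ofMul_zpow]; exact congrArg Additive.ofMul h1
  have h2' : c • Additive.ofMul x + d • Additive.ofMul y = 0 := by
    rw [← ofMul_zpow, ← ofMul_zpow]; exact congrArg Additive.ofMul h2
  have := lin2 _ _ a b c d h1' h2'
  rw [← ofMul_zpow] at this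
  exact pm_one_pow x _ hd this

lemma det2xy (x y : G) (a b c d : ℤ) (h1 : x^a * y^b = 1) (h2 : x^c * y^d = 1)
    (hd : a*d - b*c = 1 ∨ a*d - b*c = -1) : x = 1 ∧ y = 1 := by
  refine ⟨det2x x y a b c d h1 h2 hd, det2x y x b a d c ?_ ?_ ?_⟩
  · rw [mul_comm]; exact h1
  · rw [mul_comm]; exact h2
  · omega

lemma det3x (x y z : G) (a b c d e f g h i : ℤ)
    (h1 : x^a * y^b * z^c = 1) (h2 : x^d * y^e * z^f = 1) (h3 : x^g * y^h * z^i = 1)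
    (hd : a*e*i - a*f*h - b*d*i + b*f*g + c*d*h - c*e*g = 1 ∨
          a*e*i - a*f*h - b*d*i + b*f*g + c*d*h - c*e*g = -1) : x = 1 := by
  have t : ∀ (u v w : G) (p q r : ℤ), u^p * v^q * w^r = 1 →
      p • Additive.ofMul u + q • Additive.ofMul v + r • Additive.ofMul w = 0 := by
    intro u v w p q r hh
    rw [← ofMul_zpow, ← ofMul_zpow, ← ofMul_zpow]; exact congrArg Additive.ofMul hh
  have := lin3 _ _ _ a b c d e f g h i (t _ _ _ _ _ _ h1) (t _ _ _ _ _ _ h2) (t _ _ _ _ _ _ h3)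
  rw [← ofMul_zpow] at this
  exact pm_one_pow x _ hd this

lemma det3xyz (x y z : G) (a b c d e f g h i : ℤ)
    (h1 : x^a * y^b * z^c = 1) (h2 : x^d * y^e * z^f = 1) (h3 : x^g * y^h * z^i = 1)
    (hd : a*e*i - a*f*h - b*d*i + b*f*g + c*d*h - c*e*g = 1 ∨
          a*e*i - a*f*h - b*d*i + b*f*g + c*d*h - c*e*g = -1) : x = 1 ∧ y = 1 ∧ z = 1 := by
  have r1 : y^b * z^c * x^a = 1 := by rw [← mul_rotate]; exact h1
  have r2 : y^e * z^f * x^d = 1 := by rw [← mul_rotate]; exact h2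
  have r3 : y^h * z^i * x^g = 1 := by rw [← mul_rotate]; exact h3
  have s1 : z^c * x^a * y^b = 1 := by rw [mul_rotate]; exact h1
  have s2 : z^f * x^d * y^e = 1 := by rw [mul_rotate]; exact h2
  have s3 : z^i * x^g * y^h = 1 := by rw [mul_rotate]; exact h3
  refine ⟨det3x x y z a b c d e f g h i h1 h2 h3 hd,
          det3x y z x b c a e f d h i g r1 r2 r3 ?_,
          det3x z x y c a b f d e i g h s1 s2 s3 ?_⟩ <;>
  · rcases hd with hh | hh
    · left; linear_combination hh
    · right; linear_combination hh
end grp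

lemma reverse_dir (A : Matrix (Fin 3) (Fin 3) ℤ)
    (h00 : A 0 0 = 1 ∨ A 0 0 = -1) (h11 : A 1 1 = 1 ∨ A 1 1 = -1) (h22 : A 2 2 = 1 ∨ A 2 2 = -1)
    (m12 : A 1 1 * A 2 2 - A 1 2 * A 2 1 = 1 ∨ A 1 1 * A 2 2 - A 1 2 * A 2 1 = -1)
    (m02 : A 0 0 * A 2 2 - A 0 2 * A 2 0 = 1 ∨ A 0 0 * A 2 2 - A 0 2 * A 2 0 = -1)
    (m01 : A 0 0 * A 1 1 - A 0 1 * A 1 0 = 1 ∨ A 0 0 * A 1 1 - A 0 1 * A 1 0 = -1)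
    (hdet : A.det = 1 ∨ A.det = -1) :
    ∀ l u v : Fin 3 → ℂ,
        (∀ i, ‖l i‖ = 1) →
        (∀ i, ‖u i‖ ^ 2 + ‖v i‖ ^ 2 = 1) →
        (∀ i, l i * u i = u i) →
        (∀ i, l 0 ^ A i 0 * l 1 ^ A i 1 * l 2 ^ A i 2 * v i = v i) →
        ∀ i, l i = 1 := by
  rw [Matrix.det_fin_three] at hdet
  intro l u v h1 h2 h3 h4
  have hl0 : ∀ i, l i ≠ 0 := by
    intro i hi
    have := h1 i
    rw [hi] at this
    simp at this
  set U : Fin 3 → ℂˣ := fun i => Units.mk0 (l i) (hl0 i) with hUdef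
  have hval : ∀ i, (U i : ℂ) = l i := fun i => rfl
  have hU1 : ∀ i, U i = 1 → l i = 1 := by
    intro i hi
    have := congrArg Units.val hi
    simpa [hval] using this
  have hU1' : ∀ i, l i = 1 → U i = 1 := by
    intro i hi
    exact Units.ext (by simp [hval, hi])
  have key : ∀ i, l i = 1 ∨ U 0 ^ A i 0 * U 1 ^ A i 1 * U 2 ^ A i 2 = 1 := by
    intro i
    by_cases hu : u i = 0
    · right
      have hv : v i ≠ 0 := by
        intro hv
        have := h2 i
        rw [hu, hv] at this
        simp at this
      have hq : l 0 ^ A i 0 * l 1 ^ A i 1 * l 2 ^ A i 2 = 1 := by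
        have := h4 i
        field_simp at this
        exact this
      exact Units.ext (by push_cast [hval]; exact hq)
    · left
      have := h3 i
      nth_rewrite 2 [show u i = 1 * u i by ring] at this
      exact mul_right_cancel₀ hu this
  suffices H : l 0 = 1 ∧ l 1 = 1 ∧ l 2 = 1 by
    intro i; fin_cases i <;> tauto
  rcases key 0 with L0 | Q0 <;> rcases key 1 with L1 | Q1 <;> rcases key 2 with L2 | Q2
  · exact ⟨L0, L1, L2⟩
  · rw [hU1' 0 L0, hU1' 1 L1] at Q2
    simp only [one_zpow, one_mul] at Q2
    exact ⟨L0, L1, hU1 2 (det1x _ _ h22 Q2)⟩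
  · rw [hU1' 0 L0, hU1' 2 L2] at Q1
    simp only [one_zpow, one_mul, mul_one] at Q1
    exact ⟨L0, hU1 1 (det1x _ _ h11 Q1), L2⟩
  · rw [hU1' 0 L0] at Q1 Q2
    simp only [one_zpow, one_mul] at Q1 Q2
    obtain ⟨hy, hz⟩ := det2xy (U 1) (U 2) _ _ _ _ Q1 Q2 m12
    exact ⟨L0, hU1 1 hy, hU1 2 hz⟩
  · rw [hU1' 1 L1, hU1' 2 L2] at Q0
    simp only [one_zpow, one_mul, mul_one] at Q0
    exact ⟨hU1 0 (det1x _ _ h00 Q0), L1, L2⟩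
  · rw [hU1' 1 L1] at Q0 Q2
    simp only [one_zpow, one_mul, mul_one] at Q0 Q2
    obtain ⟨hx, hz⟩ := det2xy (U 0) (U 2) _ _ _ _ Q0 Q2 m02
    exact ⟨hU1 0 hx, L1, hU1 2 hz⟩
  · rw [hU1' 2 L2] at Q0 Q1
    simp only [one_zpow, one_mul, mul_one] at Q0 Q1
    obtain ⟨hx, hy⟩ := det2xy (U 0) (U 1) _ _ _ _ Q0 Q1 m01
    exact ⟨hU1 0 hx, hU1 1 hy, L2⟩
  · obtain ⟨hx, hy, hz⟩ := det3xyz (U 0) (U 1) (U 2) _ _ _ _ _ _ _ _ _ Q0 Q1 Q2 hdet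
    exact ⟨hU1 0 hx, hU1 1 hy, hU1 2 hz⟩


lemma master (A : Matrix (Fin 3) (Fin 3) ℤ)
    (hfree : ∀ l u v : Fin 3 → ℂ,
        (∀ i, ‖l i‖ = 1) →
        (∀ i, ‖u i‖ ^ 2 + ‖v i‖ ^ 2 = 1) →
        (∀ i, l i * u i = u i) →
        (∀ i, l 0 ^ A i 0 * l 1 ^ A i 1 * l 2 ^ A i 2 * v i = v i) →
        ∀ i, l i = 1)
    (S : Fin 3 → Bool) (k : Fin 3 → ℝ)
    (hk : ∀ j, S j = false → k j = 0)
    (hrow : ∀ i, S i = true → ∃ n : ℤ,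
        (A i 0 : ℝ) * k 0 + (A i 1 : ℝ) * k 1 + (A i 2 : ℝ) * k 2 = n * (2 * Real.pi)) :
    ∀ j, ∃ n : ℤ, k j = n * (2 * Real.pi) := by
  have main : ∀ j, Complex.exp (k j * Complex.I) = 1 := by
    apply hfree (fun j => Complex.exp (k j * Complex.I))
        (fun i => if S i then 0 else 1) (fun i => if S i then 1 else 0)
    · intro i; simp [Complex.norm_exp]
    · intro i; cases h : S i <;> simp [h]
    · intro i
      cases h : S i
      · have : k i = 0 := hk i h
        simp [h, this]
      · simp [h]
    · intro i
      cases h : S i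
      · simp [h]
      · obtain ⟨n, hn⟩ := hrow i h
        simp only [h, if_pos, mul_one]
        rw [← Complex.exp_int_mul, ← Complex.exp_int_mul, ← Complex.exp_int_mul,
          ← Complex.exp_add, ← Complex.exp_add]
        have key : ((A i 0 : ℂ) * (↑(k 0) * Complex.I) + (A i 1 : ℂ) * (↑(k 1) * Complex.I)
            + (A i 2 : ℂ) * (↑(k 2) * Complex.I)) = n * (2 * (Real.pi : ℂ) * Complex.I) := by
          have h2 := congrArg (Complex.ofReal) hn
          push_cast at h2 ⊢
          linear_combination Complex.I * h2
        rw [key]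
        exact Complex.exp_int_mul_two_pi_mul_I n
  intro j
  obtain ⟨n, hn⟩ := Complex.exp_eq_one_iff.mp (main j)
  refine ⟨n, ?_⟩
  have hn' : ((k j : ℂ)) * Complex.I = ((n : ℂ) * (2 * (Real.pi : ℂ))) * Complex.I := by
    rw [hn]; ring
  have := mul_right_cancel₀ Complex.I_ne_zero hn'
  exact_mod_cast this
lemma helper2 (r s n : ℤ) (hs : (s:ℝ) ≠ 0)
    (h : (r:ℝ) * (2 * Real.pi / (s:ℝ)) = n * (2 * Real.pi)) : r = n * s := by
  have hpi := Real.pi_ne_zero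
  field_simp at h
  have key : (r:ℝ) = n*s := by
    have h2 : ((r:ℝ) - n*s) * (2 * Real.pi) = 0 := by rw [h]; ring
    rcases mul_eq_zero.mp h2 with h3 | h3
    · linarith
    · have : Real.pi = 0 := by linarith
      exact absurd this hpi
  exact_mod_cast key

lemma helper1' (r n : ℤ) (h : (r:ℝ) * Real.pi = n * (2 * Real.pi)) : r = 2 * n := by
  have hpi := Real.pi_ne_zero
  have key : (r:ℝ) = 2*n := by
    have h2 : ((r:ℝ) - 2*n) * Real.pi = 0 := by linarith
    rcases mul_eq_zero.mp h2 with h3 | h3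
    · linarith
    · exact absurd h3 hpi
  exact_mod_cast key

lemma unit_of (m n r : ℤ) (hr : r = 1 ∨ r = -1) (h : r = n * m) : m = 1 ∨ m = -1 := by
  have : IsUnit m := by
    rcases hr with hr | hr
    · exact IsUnit.of_mul_eq_one (a := m) n (by linarith [h])
    · exact IsUnit.of_mul_eq_one (a := m) (-n) (by linarith [h])
  exact Int.isUnit_iff.mp this

section conds
variable (A : Matrix (Fin 3) (Fin 3) ℤ)
variable (hfree : ∀ l u v : Fin 3 → ℂ,
        (∀ i, ‖l i‖ = 1) →
        (∀ i, ‖u i‖ ^ 2 + ‖v i‖ ^ 2 = 1) →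
        (∀ i, l i * u i = u i) →
        (∀ i, l 0 ^ A i 0 * l 1 ^ A i 1 * l 2 ^ A i 2 * v i = v i) →
        ∀ i, l i = 1)

include hfree

lemma cond_diag (i : Fin 3) : A i i = 1 ∨ A i i = -1 := by
  by_contra hcon
  push_neg at hcon
  obtain ⟨hc1, hc2⟩ := hcon
  rcases eq_or_ne (A i i) 0 with h0 | h0
  · obtain ⟨n, hn⟩ := master A hfree (fun j => decide (j = i))
      (fun j => if j = i then Real.pi else 0)
      (by intro j hj
          simp only [decide_eq_false_iff_not] at hj
          simp [hj])
      (by intro i' hi'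
          simp only [decide_eq_true_eq] at hi'
          subst hi'
          refine ⟨0, ?_⟩
          clear hfree
          fin_cases i' <;> simp_all) i
    rw [if_pos rfl] at hn
    have h1 : (1 : ℤ) = 2 * n := helper1' 1 n (by push_cast; linarith)
    omega
  · obtain ⟨n, hn⟩ := master A hfree (fun j => decide (j = i))
      (fun j => if j = i then 2 * Real.pi / (A i i : ℝ) else 0)
      (by intro j hj
          simp only [decide_eq_false_iff_not] at hj
          simp [hj])
      (by intro i' hi'
          simp only [decide_eq_true_eq] at hi'
          subst hi'
          refine ⟨1, ?_⟩
          have hA : ((A i' i' : ℤ) : ℝ) ≠ 0 := by exact_mod_cast h0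
          clear hfree
          fin_cases i' <;> simp_all <;> field_simp) i
    rw [if_pos rfl] at hn
    have hA : ((A i i : ℤ) : ℝ) ≠ 0 := by exact_mod_cast h0
    have h1 : (1 : ℤ) = n * A i i := helper2 1 (A i i) n hA (by push_cast; linarith)
    exact absurd (unit_of (A i i) n 1 (Or.inl rfl) h1) (by tauto)

lemma cond_minor12 (hdiag : A 1 1 = 1 ∨ A 1 1 = -1) :
    A 1 1 * A 2 2 - A 1 2 * A 2 1 = 1 ∨
    A 1 1 * A 2 2 - A 1 2 * A 2 1 = -1 := by
  by_contra hcon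
  push_neg at hcon
  obtain ⟨hc1, hc2⟩ := hcon
  rcases eq_or_ne (A 1 1 * A 2 2 - A 1 2 * A 2 1) 0 with h0 | h0
  · obtain ⟨n, hn⟩ := master A hfree ![false, true, true]
      ![0, (A 1 2 : ℝ) * Real.pi, -(A 1 1 : ℝ) * Real.pi]
      (by intro t ht; fin_cases t <;> simp_all)
      (by intro t ht
          fin_cases t
          · simp at ht
          · refine ⟨0, ?_⟩
            simp only [Matrix.cons_val_zero, Matrix.cons_val_one, Matrix.head_cons,
              Matrix.cons_val_two, Matrix.tail_cons]
            push_cast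
            ring
          · refine ⟨0, ?_⟩
            have hz : ((A 2 1 * A 1 2 - A 2 2 * A 1 1 : ℤ) : ℝ) = 0 := by
              exact_mod_cast (by linear_combination -h0 :
                A 2 1 * A 1 2 - A 2 2 * A 1 1 = 0)
            simp only [Matrix.cons_val_zero, Matrix.cons_val_one, Matrix.head_cons,
              Matrix.cons_val_two, Matrix.tail_cons]
            push_cast at hz ⊢
            linear_combination Real.pi * hz) (2 : Fin 3)
    simp at hn
    have h1 : -A 1 1 = 2 * n := helper1' _ n (by push_cast; linarith)
    rcases hdiag with h | h <;> omega
  · have hm : ((A 1 1 * A 2 2 - A 1 2 * A 2 1 : ℤ) : ℝ) ≠ 0 := by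
      exact_mod_cast h0
    obtain ⟨n, hn⟩ := master A hfree ![false, true, true]
      ![0, -(A 1 2 : ℝ) * (2 * Real.pi / ((A 1 1 * A 2 2 - A 1 2 * A 2 1 : ℤ) : ℝ)), (A 1 1 : ℝ) * (2 * Real.pi / ((A 1 1 * A 2 2 - A 1 2 * A 2 1 : ℤ) : ℝ))]
      (by intro t ht; fin_cases t <;> simp_all)
      (by intro t ht
          fin_cases t
          · simp at ht
          · refine ⟨0, ?_⟩
            simp only [Matrix.cons_val_zero, Matrix.cons_val_one, Matrix.head_cons,
              Matrix.cons_val_two, Matrix.tail_cons]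
            push_cast
            ring
          · refine ⟨1, ?_⟩
            simp only [Matrix.cons_val_zero, Matrix.cons_val_one, Matrix.head_cons,
              Matrix.cons_val_two, Matrix.tail_cons]
            push_cast at hm ⊢
            have hD := mul_inv_cancel₀ hm
            linear_combination (2 * Real.pi) * hD) (2 : Fin 3)
    simp at hn
    have h1 : A 1 1 = n * (A 1 1 * A 2 2 - A 1 2 * A 2 1) :=
      helper2 _ _ n hm (by push_cast at hn ⊢; linarith)
    exact absurd (unit_of _ n _ hdiag h1) (by tauto)

lemma cond_minor02 (hdiag : A 0 0 = 1 ∨ A 0 0 = -1) :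
    A 0 0 * A 2 2 - A 0 2 * A 2 0 = 1 ∨
    A 0 0 * A 2 2 - A 0 2 * A 2 0 = -1 := by
  by_contra hcon
  push_neg at hcon
  obtain ⟨hc1, hc2⟩ := hcon
  rcases eq_or_ne (A 0 0 * A 2 2 - A 0 2 * A 2 0) 0 with h0 | h0
  · obtain ⟨n, hn⟩ := master A hfree ![true, false, true]
      ![(A 0 2 : ℝ) * Real.pi, 0, -(A 0 0 : ℝ) * Real.pi]
      (by intro t ht; fin_cases t <;> simp_all)
      (by intro t ht
          fin_cases t
          · refine ⟨0, ?_⟩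
            simp only [Matrix.cons_val_zero, Matrix.cons_val_one, Matrix.head_cons,
              Matrix.cons_val_two, Matrix.tail_cons]
            push_cast
            ring
          · simp at ht
          · refine ⟨0, ?_⟩
            have hz : ((A 2 0 * A 0 2 - A 2 2 * A 0 0 : ℤ) : ℝ) = 0 := by
              exact_mod_cast (by linear_combination -h0 :
                A 2 0 * A 0 2 - A 2 2 * A 0 0 = 0)
            simp only [Matrix.cons_val_zero, Matrix.cons_val_one, Matrix.head_cons,
              Matrix.cons_val_two, Matrix.tail_cons]
            push_cast at hz ⊢
            linear_combination Real.pi * hz) (2 : Fin 3)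
    simp at hn
    have h1 : -A 0 0 = 2 * n := helper1' _ n (by push_cast; linarith)
    rcases hdiag with h | h <;> omega
  · have hm : ((A 0 0 * A 2 2 - A 0 2 * A 2 0 : ℤ) : ℝ) ≠ 0 := by
      exact_mod_cast h0
    obtain ⟨n, hn⟩ := master A hfree ![true, false, true]
      ![-(A 0 2 : ℝ) * (2 * Real.pi / ((A 0 0 * A 2 2 - A 0 2 * A 2 0 : ℤ) : ℝ)), 0, (A 0 0 : ℝ) * (2 * Real.pi / ((A 0 0 * A 2 2 - A 0 2 * A 2 0 : ℤ) : ℝ))]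
      (by intro t ht; fin_cases t <;> simp_all)
      (by intro t ht
          fin_cases t
          · refine ⟨0, ?_⟩
            simp only [Matrix.cons_val_zero, Matrix.cons_val_one, Matrix.head_cons,
              Matrix.cons_val_two, Matrix.tail_cons]
            push_cast
            ring
          · simp at ht
          · refine ⟨1, ?_⟩
            simp only [Matrix.cons_val_zero, Matrix.cons_val_one, Matrix.head_cons,
              Matrix.cons_val_two, Matrix.tail_cons]
            push_cast at hm ⊢
            have hD := mul_inv_cancel₀ hm
            linear_combination (2 * Real.pi) * hD) (2 : Fin 3)
    simp at hn
    have h1 : A 0 0 = n * (A 0 0 * A 2 2 - A 0 2 * A 2 0) :=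
      helper2 _ _ n hm (by push_cast at hn ⊢; linarith)
    exact absurd (unit_of _ n _ hdiag h1) (by tauto)

lemma cond_minor01 (hdiag : A 0 0 = 1 ∨ A 0 0 = -1) :
    A 0 0 * A 1 1 - A 0 1 * A 1 0 = 1 ∨
    A 0 0 * A 1 1 - A 0 1 * A 1 0 = -1 := by
  by_contra hcon
  push_neg at hcon
  obtain ⟨hc1, hc2⟩ := hcon
  rcases eq_or_ne (A 0 0 * A 1 1 - A 0 1 * A 1 0) 0 with h0 | h0
  · obtain ⟨n, hn⟩ := master A hfree ![true, true, false]
      ![(A 0 1 : ℝ) * Real.pi, -(A 0 0 : ℝ) * Real.pi, 0]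
      (by intro t ht; fin_cases t <;> simp_all)
      (by intro t ht
          fin_cases t
          · refine ⟨0, ?_⟩
            simp only [Matrix.cons_val_zero, Matrix.cons_val_one, Matrix.head_cons,
              Matrix.cons_val_two, Matrix.tail_cons]
            push_cast
            ring
          · refine ⟨0, ?_⟩
            have hz : ((A 1 0 * A 0 1 - A 1 1 * A 0 0 : ℤ) : ℝ) = 0 := by
              exact_mod_cast (by linear_combination -h0 :
                A 1 0 * A 0 1 - A 1 1 * A 0 0 = 0)
            simp only [Matrix.cons_val_zero, Matrix.cons_val_one, Matrix.head_cons,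
              Matrix.cons_val_two, Matrix.tail_cons]
            push_cast at hz ⊢
            linear_combination Real.pi * hz
          · simp at ht) (1 : Fin 3)
    simp at hn
    have h1 : -A 0 0 = 2 * n := helper1' _ n (by push_cast; linarith)
    rcases hdiag with h | h <;> omega
  · have hm : ((A 0 0 * A 1 1 - A 0 1 * A 1 0 : ℤ) : ℝ) ≠ 0 := by
      exact_mod_cast h0
    obtain ⟨n, hn⟩ := master A hfree ![true, true, false]
      ![-(A 0 1 : ℝ) * (2 * Real.pi / ((A 0 0 * A 1 1 - A 0 1 * A 1 0 : ℤ) : ℝ)), (A 0 0 : ℝ) * (2 * Real.pi / ((A 0 0 * A 1 1 - A 0 1 * A 1 0 : ℤ) : ℝ)), 0]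
      (by intro t ht; fin_cases t <;> simp_all)
      (by intro t ht
          fin_cases t
          · refine ⟨0, ?_⟩
            simp only [Matrix.cons_val_zero, Matrix.cons_val_one, Matrix.head_cons,
              Matrix.cons_val_two, Matrix.tail_cons]
            push_cast
            ring
          · refine ⟨1, ?_⟩
            simp only [Matrix.cons_val_zero, Matrix.cons_val_one, Matrix.head_cons,
              Matrix.cons_val_two, Matrix.tail_cons]
            push_cast at hm ⊢
            have hD := mul_inv_cancel₀ hm
            linear_combination (2 * Real.pi) * hD
          · simp at ht) (1 : Fin 3)
    simp at hn
    have h1 : A 0 0 = n * (A 0 0 * A 1 1 - A 0 1 * A 1 0) :=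
      helper2 _ _ n hm (by push_cast at hn ⊢; linarith)
    exact absurd (unit_of _ n _ hdiag h1) (by tauto)

lemma cond_det
    (hm12 : A 1 1 * A 2 2 - A 1 2 * A 2 1 = 1 ∨ A 1 1 * A 2 2 - A 1 2 * A 2 1 = -1)
    (hm01 : A 0 0 * A 1 1 - A 0 1 * A 1 0 = 1 ∨ A 0 0 * A 1 1 - A 0 1 * A 1 0 = -1) :
    A.det = 1 ∨ A.det = -1 := by
  rw [Matrix.det_fin_three]
  by_contra hcon
  push_neg at hcon
  obtain ⟨hc1, hc2⟩ := hcon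
  rcases eq_or_ne (A 0 0 * A 1 1 * A 2 2 - A 0 0 * A 1 2 * A 2 1 - A 0 1 * A 1 0 * A 2 2 +
      A 0 1 * A 1 2 * A 2 0 + A 0 2 * A 1 0 * A 2 1 - A 0 2 * A 1 1 * A 2 0) 0 with h0 | h0
  · obtain ⟨n, hn⟩ := master A hfree ![true, true, true]
      ![((A 0 1 * A 1 2 - A 0 2 * A 1 1 : ℤ) : ℝ) * Real.pi,
        ((A 0 2 * A 1 0 - A 0 0 * A 1 2 : ℤ) : ℝ) * Real.pi,
        ((A 0 0 * A 1 1 - A 0 1 * A 1 0 : ℤ) : ℝ) * Real.pi]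
      (by intro t ht; fin_cases t <;> simp_all)
      (by intro t ht
          fin_cases t
          · refine ⟨0, ?_⟩
            simp only [Matrix.cons_val_zero, Matrix.cons_val_one, Matrix.head_cons,
              Matrix.cons_val_two, Matrix.tail_cons]
            push_cast
            ring
          · refine ⟨0, ?_⟩
            simp only [Matrix.cons_val_zero, Matrix.cons_val_one, Matrix.head_cons,
              Matrix.cons_val_two, Matrix.tail_cons]
            push_cast
            ring
          · refine ⟨0, ?_⟩
            have hz : ((A 2 0 * (A 0 1 * A 1 2 - A 0 2 * A 1 1)
                + A 2 1 * (A 0 2 * A 1 0 - A 0 0 * A 1 2)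
                + A 2 2 * (A 0 0 * A 1 1 - A 0 1 * A 1 0) : ℤ) : ℝ) = 0 := by
              exact_mod_cast (by linear_combination h0 :
                A 2 0 * (A 0 1 * A 1 2 - A 0 2 * A 1 1)
                + A 2 1 * (A 0 2 * A 1 0 - A 0 0 * A 1 2)
                + A 2 2 * (A 0 0 * A 1 1 - A 0 1 * A 1 0) = 0)
            simp only [Matrix.cons_val_zero, Matrix.cons_val_one, Matrix.head_cons,
              Matrix.cons_val_two, Matrix.tail_cons]
            push_cast at hz ⊢
            linear_combination Real.pi * hz) (2 : Fin 3)
    simp at hn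
    have h1 : A 0 0 * A 1 1 - A 0 1 * A 1 0 = 2 * n := helper1' _ n (by push_cast at hn ⊢; linarith)
    rcases hm01 with h | h <;> omega
  · have hm : ((A 0 0 * A 1 1 * A 2 2 - A 0 0 * A 1 2 * A 2 1 - A 0 1 * A 1 0 * A 2 2 +
        A 0 1 * A 1 2 * A 2 0 + A 0 2 * A 1 0 * A 2 1 - A 0 2 * A 1 1 * A 2 0 : ℤ) : ℝ) ≠ 0 := by
      exact_mod_cast h0
    obtain ⟨n, hn⟩ := master A hfree ![true, true, true]
      ![((A 1 1 * A 2 2 - A 1 2 * A 2 1 : ℤ) : ℝ) * (2 * Real.pi /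
          ((A 0 0 * A 1 1 * A 2 2 - A 0 0 * A 1 2 * A 2 1 - A 0 1 * A 1 0 * A 2 2 +
          A 0 1 * A 1 2 * A 2 0 + A 0 2 * A 1 0 * A 2 1 - A 0 2 * A 1 1 * A 2 0 : ℤ) : ℝ)),
        ((A 1 2 * A 2 0 - A 1 0 * A 2 2 : ℤ) : ℝ) * (2 * Real.pi /
          ((A 0 0 * A 1 1 * A 2 2 - A 0 0 * A 1 2 * A 2 1 - A 0 1 * A 1 0 * A 2 2 +
          A 0 1 * A 1 2 * A 2 0 + A 0 2 * A 1 0 * A 2 1 - A 0 2 * A 1 1 * A 2 0 : ℤ) : ℝ)),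
        ((A 1 0 * A 2 1 - A 1 1 * A 2 0 : ℤ) : ℝ) * (2 * Real.pi /
          ((A 0 0 * A 1 1 * A 2 2 - A 0 0 * A 1 2 * A 2 1 - A 0 1 * A 1 0 * A 2 2 +
          A 0 1 * A 1 2 * A 2 0 + A 0 2 * A 1 0 * A 2 1 - A 0 2 * A 1 1 * A 2 0 : ℤ) : ℝ))]
      (by intro t ht; fin_cases t <;> simp_all)
      (by intro t ht
          fin_cases t
          · refine ⟨1, ?_⟩
            simp only [Matrix.cons_val_zero, Matrix.cons_val_one, Matrix.head_cons,
              Matrix.cons_val_two, Matrix.tail_cons]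
            push_cast at hm ⊢
            have hD := mul_inv_cancel₀ hm
            linear_combination (2 * Real.pi) * hD
          · refine ⟨0, ?_⟩
            simp only [Matrix.cons_val_zero, Matrix.cons_val_one, Matrix.head_cons,
              Matrix.cons_val_two, Matrix.tail_cons]
            push_cast
            ring
          · refine ⟨0, ?_⟩
            simp only [Matrix.cons_val_zero, Matrix.cons_val_one, Matrix.head_cons,
              Matrix.cons_val_two, Matrix.tail_cons]
            push_cast
            ring) (0 : Fin 3)
    simp at hn
    have h1 : A 1 1 * A 2 2 - A 1 2 * A 2 1 = n * (A 0 0 * A 1 1 * A 2 2 - A 0 0 * A 1 2 * A 2 1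
        - A 0 1 * A 1 0 * A 2 2 + A 0 1 * A 1 2 * A 2 0 + A 0 2 * A 1 0 * A 2 1
        - A 0 2 * A 1 1 * A 2 0) :=
      helper2 _ _ n hm (by push_cast at hn ⊢; linarith)
    exact absurd (unit_of _ n _ hm12 h1) (by tauto)

end conds


/-- The action of `Circle³` on `(S³)³` determined by a 3×3 integer matrix `A`
(acting on the `uᵢ` coordinates by the identity and on the `vᵢ` coordinates through `A`)
is free if and only if the diagonal entries, the three principal 2×2 minors, and the
determinant of `A` are all `±1`. -/
theorem stmt_0 (A : Matrix (Fin 3) (Fin 3) ℤ) :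
    (∀ l u v : Fin 3 → ℂ,
        (∀ i, ‖l i‖ = 1) →
        (∀ i, ‖u i‖ ^ 2 + ‖v i‖ ^ 2 = 1) →
        (∀ i, l i * u i = u i) →
        (∀ i, l 0 ^ A i 0 * l 1 ^ A i 1 * l 2 ^ A i 2 * v i = v i) →
        ∀ i, l i = 1) ↔
    ((A 0 0 = 1 ∨ A 0 0 = -1) ∧ (A 1 1 = 1 ∨ A 1 1 = -1) ∧ (A 2 2 = 1 ∨ A 2 2 = -1) ∧
      (A 1 1 * A 2 2 - A 1 2 * A 2 1 = 1 ∨ A 1 1 * A 2 2 - A 1 2 * A 2 1 = -1) ∧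
      (A 0 0 * A 2 2 - A 0 2 * A 2 0 = 1 ∨ A 0 0 * A 2 2 - A 0 2 * A 2 0 = -1) ∧
      (A 0 0 * A 1 1 - A 0 1 * A 1 0 = 1 ∨ A 0 0 * A 1 1 - A 0 1 * A 1 0 = -1) ∧
      (A.det = 1 ∨ A.det = -1)) := by
  constructor
  · intro hfree
    have h00 := cond_diag A hfree 0
    have h11 := cond_diag A hfree 1
    have h22 := cond_diag A hfree 2
    have hm12 := cond_minor12 A hfree h11
    have hm02 := cond_minor02 A hfree h00
    have hm01 := cond_minor01 A hfree h00
    exact ⟨h00, h11, h22, hm12, hm02, hm01, cond_det A hfree hm12 hm01⟩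
  · rintro ⟨h00, h11, h22, hm12, hm02, hm01, hdet⟩
    exact reverse_dir A h00 h11 h22 hm12 hm02 hm01 hdet
end

section
/- For every pair of integers b₁, c₁, the action of Circle³ on (S³)³ given by (λ₁,λ₂,λ₃)·((u₁,v₁),(u₂,v₂),(u₃,v₃)) = ((λ₁u₁, λ₁v₁), (λ₂u₂, λ₁^{b₁}λ₂λ₃·v₂), (λ₃u₃, λ₁^{c₁}λ₂²λ₃·v₃)) is free: for all λ₁,λ₂,λ₃ ∈ ℂ with |λᵢ| = 1 and all (u₁,v₁),(u₂,v₂),(u₃,v₃) ∈ ℂ² with |uᵢ|² + |vᵢ|² = 1 for i = 1,2,3, if λ₁u₁ = u₁, λ₁v₁ = v₁, λ₂u₂ = u₂, λ₁^{b₁}λ₂λ₃v₂ = v₂, λ₃u₃ = u₃, and λ₁^{c₁}λ₂²λ₃v₃ = v₃, then λ₁ = λ₂ = λ₃ = 1. -/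
private lemma fix_eq_one {l x : ℂ} (h : l * x = x) (hx : x ≠ 0) : l = 1 := by
  have := mul_right_cancel₀ hx (h.trans (one_mul x).symm)
  exact this

private lemma not_both_zero {u v : ℂ} (h : ‖u‖ ^ 2 + ‖v‖ ^ 2 = 1)
    (hu : u = 0) : v ≠ 0 := by
  intro hv
  simp [hu, hv] at h

/-- For every pair of integers `b₁, c₁`, the action of `Circle³` on `(S³)³` given by
`(λ₁,λ₂,λ₃)·((u₁,v₁),(u₂,v₂),(u₃,v₃)) =
  ((λ₁u₁, λ₁v₁), (λ₂u₂, λ₁^b₁λ₂λ₃ v₂), (λ₃u₃, λ₁^c₁λ₂²λ₃ v₃))` is free. -/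
theorem stmt_1 (b₁ c₁ : ℤ) (l₁ l₂ l₃ u₁ v₁ u₂ v₂ u₃ v₃ : ℂ)
    (hl₁ : ‖l₁‖ = 1) (hl₂ : ‖l₂‖ = 1) (hl₃ : ‖l₃‖ = 1)
    (h₁ : ‖u₁‖ ^ 2 + ‖v₁‖ ^ 2 = 1)
    (h₂ : ‖u₂‖ ^ 2 + ‖v₂‖ ^ 2 = 1)
    (h₃ : ‖u₃‖ ^ 2 + ‖v₃‖ ^ 2 = 1)
    (e₁ : l₁ * u₁ = u₁) (e₁' : l₁ * v₁ = v₁)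
    (e₂ : l₂ * u₂ = u₂) (e₂' : l₁ ^ b₁ * l₂ * l₃ * v₂ = v₂)
    (e₃ : l₃ * u₃ = u₃) (e₃' : l₁ ^ c₁ * l₂ ^ 2 * l₃ * v₃ = v₃) :
    l₁ = 1 ∧ l₂ = 1 ∧ l₃ = 1 := by
  have hL1 : l₁ = 1 := by
    by_cases hu : u₁ = 0
    · exact fix_eq_one e₁' (not_both_zero h₁ hu)
    · exact fix_eq_one e₁ hu
  subst hL1
  simp only [one_zpow, one_mul] at e₂' e₃'
  refine ⟨rfl, ?_⟩
  by_cases hu2 : u₂ = 0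
  · have hv2 : v₂ ≠ 0 := not_both_zero h₂ hu2
    have h23 : l₂ * l₃ = 1 := fix_eq_one e₂' hv2
    by_cases hu3 : u₃ = 0
    · have hv3 : v₃ ≠ 0 := not_both_zero h₃ hu3
      have h223 : l₂ ^ 2 * l₃ = 1 := fix_eq_one e₃' hv3
      have hl2 : l₂ = 1 := by
        have : l₂ * (l₂ * l₃) = 1 := by ring_nf; ring_nf at h223; linear_combination h223
        rw [h23, mul_one] at this; exact this
      have hl3 : l₃ = 1 := by rw [hl2, one_mul] at h23; exact h23
      exact ⟨hl2, hl3⟩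
    · have hl3 : l₃ = 1 := fix_eq_one e₃ hu3
      have hl2 : l₂ = 1 := by rw [hl3, mul_one] at h23; exact h23
      exact ⟨hl2, hl3⟩
  · have hl2 : l₂ = 1 := fix_eq_one e₂ hu2
    refine ⟨hl2, ?_⟩
    by_cases hu3 : u₃ = 0
    · have hv3 : v₃ ≠ 0 := not_both_zero h₃ hu3
      have h223 : l₂ ^ 2 * l₃ = 1 := fix_eq_one e₃' hv3
      rw [hl2] at h223; simpa using h223
    · exact fix_eq_one e₃ hu3
end

section
/- For every pair of integers b₁, c₁, the three polynomials x₁², x₂(b₁x₁ + x₂ + x₃), and x₃(c₁x₁ + 2x₂ + x₃) form a regular sequence in the polynomial ring ℤ[x₁, x₂, x₃]. -/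
open MvPolynomial

namespace Stmt2Aux

abbrev A := MvPolynomial (Fin 3) ℤ

lemma key (p : A) (v : Fin 3 → A) (hv : ∀ i, p ∣ X i - v i) (f : A) :
    p ∣ f - aeval v f := by
  induction f using MvPolynomial.induction_on with
  | C a => simp
  | add q r hq hr =>
      have : q + r - aeval v (q + r) = (q - aeval v q) + (r - aeval v r) := by
        rw [map_add]; ring
      rw [this]; exact dvd_add hq hr
  | mul_X q i hq =>
      have : q * X i - aeval v (q * X i) =
          (q - aeval v q) * X i + aeval v q * (X i - v i) := by
        rw [map_mul, aeval_X]; ring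
      rw [this]; exact dvd_add (hq.mul_right _) ((hv i).mul_left _)

lemma dvd_iff (p : A) (v : Fin 3 → A) (hv : ∀ i, p ∣ X i - v i)
    (hp : aeval v p = 0) (f : A) : p ∣ f ↔ aeval v f = 0 := by
  constructor
  · rintro ⟨t, rfl⟩; rw [map_mul, hp, zero_mul]
  · intro h
    have := key p v hv f
    rwa [h, sub_zero] at this

lemma prime_of (p : A) (v : Fin 3 → A) (hv : ∀ i, p ∣ X i - v i)
    (hp : aeval v p = 0) (hpz : p ≠ 0) : Prime p := by
  refine ⟨hpz, ?_, ?_⟩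
  · intro hu
    have : p ∣ 1 := hu.dvd
    rw [dvd_iff p v hv hp, map_one] at this
    exact one_ne_zero this
  · intro a b hab
    rw [dvd_iff p v hv hp, map_mul, mul_eq_zero] at hab
    exact hab.imp ((dvd_iff p v hv hp a).mpr) ((dvd_iff p v hv hp b).mpr)


noncomputable def phi : A →ₐ[ℤ] A := aeval ![0, X 1, X 2]

lemma hv0 : ∀ i : Fin 3, (X 0 : A) ∣ X i - (![0, X 1, X 2]) i := by
  intro i; fin_cases i <;> simp

lemma X0_dvd_iff (f : A) : (X 0 : A) ∣ f ↔ phi f = 0 := by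
  refine dvd_iff _ _ hv0 ?_ f
  simp

lemma prime_X1 : Prime (X 1 : A) := by
  refine prime_of _ ![X 0, 0, X 2] ?_ ?_ (X_ne_zero 1)
  · intro i; fin_cases i <;> simp
  · simp

lemma prime_X12 : Prime (X 1 + X 2 : A) := by
  refine prime_of _ ![X 0, -X 2, X 2] ?_ ?_ ?_
  · intro i; fin_cases i <;> simp
  · simp
  · intro h
    have : aeval (![X 0, (0:A), X 2]) (X 1 + X 2 : A) = 0 := by rw [h]; simp
    simp at this

lemma dvd_X1_iff (f : A) : (X 1 : A) ∣ f ↔ aeval ![X 0, (0:A), X 2] f = 0 := by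
  refine dvd_iff _ _ ?_ ?_ f
  · intro i; fin_cases i <;> simp
  · simp

lemma dvd_X12_iff (f : A) : (X 1 + X 2 : A) ∣ f ↔ aeval ![X 0, (-X 2 : A), X 2] f = 0 := by
  refine dvd_iff _ _ ?_ ?_ f
  · intro i; fin_cases i <;> simp
  · simp

lemma lemA (f : A) (h : (X 1 : A) * (X 1 + X 2) ∣ X 2 * (2 * X 1 + X 2) * f) :
    (X 1 : A) * (X 1 + X 2) ∣ f := by
  have h1 : (X 1 : A) ∣ X 2 * (2 * X 1 + X 2) * f :=
    dvd_trans (dvd_mul_right _ _) h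
  have n1 : ¬ (X 1 : A) ∣ X 2 := by
    rw [dvd_X1_iff]; simp
  have n2 : ¬ (X 1 : A) ∣ (2 * X 1 + X 2) := by
    rw [dvd_X1_iff]; simp
  have hf : (X 1 : A) ∣ f := by
    rcases prime_X1.dvd_mul.mp h1 with h' | h'
    · rcases prime_X1.dvd_mul.mp h' with h'' | h''
      · exact absurd h'' n1
      · exact absurd h'' n2
    · exact h'
  obtain ⟨f', rfl⟩ := hf
  have h2 : (X 1 : A) * (X 1 + X 2) ∣ X 1 * (X 2 * (2 * X 1 + X 2) * f') := by
    have : X 2 * (2 * X 1 + X 2) * (X 1 * f') = X 1 * (X 2 * (2 * X 1 + X 2) * f') := by ring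
    rwa [this] at h
  have h3 : (X 1 + X 2 : A) ∣ X 2 * (2 * X 1 + X 2) * f' :=
    (mul_dvd_mul_iff_left (X_ne_zero 1)).mp h2
  have n3 : ¬ (X 1 + X 2 : A) ∣ X 2 := by
    rw [dvd_X12_iff]; simp
  have n4 : ¬ (X 1 + X 2 : A) ∣ (2 * X 1 + X 2) := by
    rw [dvd_X12_iff]
    simp only [map_add, map_mul, aeval_X, map_ofNat]
    simp only [Matrix.cons_val_one, Matrix.head_cons, Matrix.cons_val_two, Matrix.tail_cons,
      Matrix.cons_val_zero]
    intro hh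
    apply X_ne_zero (σ := Fin 3) (R := ℤ) 2
    linear_combination -hh
  have hf' : (X 1 + X 2 : A) ∣ f' := by
    rcases prime_X12.dvd_mul.mp h3 with h' | h'
    · rcases prime_X12.dvd_mul.mp h' with h'' | h''
      · exact absurd h'' n3
      · exact absurd h'' n4
    · exact h'
  obtain ⟨w, rfl⟩ := hf'
  exact ⟨w, by ring⟩


lemma phi_X0 : phi (X 0) = 0 := by simp [phi]

lemma phi_X1 : phi (X 1) = X 1 := by simp [phi]

lemma phi_X2 : phi (X 2) = X 2 := by simp [phi]

lemma phi_C (t : ℤ) : phi (C t) = C t := by simp [phi, algebraMap_eq]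

lemma phiphi (f : A) : phi (phi f) = phi f := by
  have h : phi.comp phi = phi := by
    apply MvPolynomial.algHom_ext
    intro i
    fin_cases i <;> simp [phi]
  exact DFunLike.congr_fun h f

lemma phi_f1 : phi ((X 0 : A) ^ 2) = 0 := by simp [phi]

lemma phi_g (b : ℤ) : phi (X 1 * (C b * X 0 + X 1 + X 2)) = X 1 * (X 1 + X 2) := by
  simp [phi, algebraMap_eq]

lemma phi_h (c : ℤ) : phi (X 2 * (C c * X 0 + 2 * X 1 + X 2)) = X 2 * (2 * X 1 + X 2) := by
  simp [phi, algebraMap_eq, map_ofNat]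

lemma smul_top_eq (I : Ideal A) : (I • ⊤ : Submodule A A) = I := by
  conv_lhs => rw [← Ideal.span_eq I]
  rw [Submodule.span_smul_eq, Submodule.set_smul_top_eq_span, Ideal.span_eq]

lemma smul_reg (N : Submodule A A) (r : A) (h : ∀ x : A, r * x ∈ N → x ∈ N) :
    IsSMulRegular (A ⧸ N) r := by
  intro a b hab
  obtain ⟨x, rfl⟩ := Submodule.Quotient.mk_surjective _ a
  obtain ⟨y, rfl⟩ := Submodule.Quotient.mk_surjective _ b
  simp only [← Submodule.Quotient.mk_smul] at hab
  rw [Submodule.Quotient.eq] at hab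
  rw [Submodule.Quotient.eq]
  have e : r • x - r • y = r * (x - y) := by
    simp only [smul_eq_mul]; ring
  exact h _ (by rw [← e] at *; exact hab)

lemma step2 (b : ℤ) (x : A)
    (hx : X 1 * (C b * X 0 + X 1 + X 2) * x ∈ Ideal.span {(X 0 : A) ^ 2}) :
    x ∈ Ideal.span {(X 0 : A) ^ 2} := by
  set g : A := X 1 * (C b * X 0 + X 1 + X 2) with hg
  rw [Ideal.mem_span_singleton] at hx ⊢
  have P_ne : (X 1 * (X 1 + X 2) : A) ≠ 0 := mul_ne_zero (X_ne_zero 1) prime_X12.ne_zero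
  have hd1 : (X 0 : A) ∣ g * x := dvd_trans (dvd_pow_self _ two_ne_zero) hx
  have hphix : phi x = 0 := by
    have h' := (X0_dvd_iff _).mp hd1
    rw [map_mul, hg, phi_g] at h'
    exact (mul_eq_zero.mp h').resolve_left P_ne
  obtain ⟨y, rfl⟩ := (X0_dvd_iff x).mpr hphix
  have hd2 : (X 0 : A) ∣ g * y := by
    have h' : (X 0 : A) * X 0 ∣ X 0 * (g * y) := by
      have e : g * (X 0 * y) = X 0 * (g * y) := by ring
      rw [pow_two] at hx; rwa [e] at hx
    exact (mul_dvd_mul_iff_left (X_ne_zero 0)).mp h'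
  have hphiy : phi y = 0 := by
    have h' := (X0_dvd_iff _).mp hd2
    rw [map_mul, hg, phi_g] at h'
    exact (mul_eq_zero.mp h').resolve_left P_ne
  obtain ⟨z, rfl⟩ := (X0_dvd_iff y).mpr hphiy
  exact ⟨z, by ring⟩

lemma step3 (b c : ℤ) (x : A)
    (hx : X 2 * (C c * X 0 + 2 * X 1 + X 2) * x ∈
      Ideal.span {(X 0 : A) ^ 2} ⊔ Ideal.span {X 1 * (C b * X 0 + X 1 + X 2)}) :
    x ∈ Ideal.span {(X 0 : A) ^ 2} ⊔ Ideal.span {X 1 * (C b * X 0 + X 1 + X 2)} := by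
  have P_ne : (X 1 * (X 1 + X 2) : A) ≠ 0 := mul_ne_zero (X_ne_zero 1) prime_X12.ne_zero
  have phiP : phi (X 1 * (X 1 + X 2)) = X 1 * (X 1 + X 2) := by
    rw [map_mul, map_add, phi_X1, phi_X2]
  have mem_iff : ∀ u : A, (u ∈ Ideal.span {(X 0 : A) ^ 2} ⊔
      Ideal.span {X 1 * (C b * X 0 + X 1 + X 2)} ↔
      ∃ a' b', a' * (X 0 : A) ^ 2 + b' * (X 1 * (C b * X 0 + X 1 + X 2)) = u) := by
    intro u
    rw [← Ideal.span_insert, Ideal.mem_span_pair]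
  rw [mem_iff] at hx ⊢
  obtain ⟨a, b', hab⟩ := hx
  have e1 : phi b' * (X 1 * (X 1 + X 2)) = X 2 * (2 * X 1 + X 2) * phi x := by
    have h' := congrArg phi hab
    simp only [map_add, map_sub, map_mul, map_pow, map_ofNat, phi_X0, phi_X1, phi_X2,
      phi_C] at h'
    linear_combination h'
  obtain ⟨r0, hr0⟩ := lemA (phi x) ⟨phi b', by linear_combination -e1⟩
  have hphix : phi x = X 1 * (X 1 + X 2) * phi r0 := by
    rw [← phiphi x, hr0, map_mul, phiP]
  obtain ⟨y, hy⟩ : (X 0 : A) ∣ x - X 1 * (C b * X 0 + X 1 + X 2) * phi r0 := by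
    rw [X0_dvd_iff, map_sub, map_mul, phi_g, hphix, phiphi]
    ring
  have e2 : (X 0 : A) * (X 2 * (C c * X 0 + 2 * X 1 + X 2) * y) =
      a * (X 0 : A) ^ 2 +
        (b' - X 2 * (C c * X 0 + 2 * X 1 + X 2) * phi r0) *
          (X 1 * (C b * X 0 + X 1 + X 2)) := by
    linear_combination -hab - (X 2 * (C c * X 0 + 2 * X 1 + X 2)) * hy
  obtain ⟨s, hs⟩ : (X 0 : A) ∣ b' - X 2 * (C c * X 0 + 2 * X 1 + X 2) * phi r0 := by
    rw [X0_dvd_iff]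
    have h' := congrArg phi e2
    simp only [map_add, map_sub, map_mul, map_pow, map_ofNat, phi_X0, phi_X1, phi_X2,
      phi_C, phiphi] at h'
    have h'' : (phi b' - X 2 * (2 * X 1 + X 2) * phi r0) * (X 1 * (X 1 + X 2)) = 0 := by
      linear_combination -h'
    have h3 := (mul_eq_zero.mp h'').resolve_right P_ne
    simp only [map_sub, map_mul, map_add, map_ofNat, phi_X0, phi_X1, phi_X2, phi_C, phiphi]
    linear_combination h3
  have e4 : X 2 * (C c * X 0 + 2 * X 1 + X 2) * y = a * X 0 +
      s * (X 1 * (C b * X 0 + X 1 + X 2)) := by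
    have e' : (X 0 : A) * (X 2 * (C c * X 0 + 2 * X 1 + X 2) * y) =
        X 0 * (a * X 0 + s * (X 1 * (C b * X 0 + X 1 + X 2))) := by
      linear_combination e2 + (X 1 * (C b * X 0 + X 1 + X 2)) * hs
    exact mul_left_cancel₀ (X_ne_zero 0) e'
  have e5 : X 2 * (2 * X 1 + X 2) * phi y = phi s * (X 1 * (X 1 + X 2)) := by
    have h' := congrArg phi e4
    simp only [map_add, map_sub, map_mul, map_pow, map_ofNat, phi_X0, phi_X1, phi_X2,
      phi_C] at h'
    linear_combination h'
  obtain ⟨u0, hu0⟩ := lemA (phi y) ⟨phi s, by linear_combination e5⟩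
  have hphiy : phi y = X 1 * (X 1 + X 2) * phi u0 := by
    rw [← phiphi y, hu0, map_mul, phiP]
  obtain ⟨z, hz⟩ : (X 0 : A) ∣ y - X 1 * (C b * X 0 + X 1 + X 2) * phi u0 := by
    rw [X0_dvd_iff, map_sub, map_mul, phi_g, hphiy, phiphi]
    ring
  exact ⟨z, phi r0 + X 0 * phi u0, by linear_combination -hy - X 0 * hz⟩

lemma not_top (b c : ℤ) :
    Ideal.ofList [(X 0 : A) ^ 2, X 1 * (C b * X 0 + X 1 + X 2),
      X 2 * (C c * X 0 + 2 * X 1 + X 2)] ≠ ⊤ := by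
  intro hEq
  have h1 : (1 : A) ∈ Ideal.ofList [(X 0 : A) ^ 2, X 1 * (C b * X 0 + X 1 + X 2),
      X 2 * (C c * X 0 + 2 * X 1 + X 2)] := hEq.symm ▸ Submodule.mem_top
  have hle : Ideal.ofList [(X 0 : A) ^ 2, X 1 * (C b * X 0 + X 1 + X 2),
      X 2 * (C c * X 0 + 2 * X 1 + X 2)] ≤
      RingHom.ker (eval (fun _ : Fin 3 => (0 : ℤ))) := by
    simp only [Ideal.ofList_cons, Ideal.ofList_nil, sup_le_iff]
    refine ⟨?_, ?_, ?_, bot_le⟩ <;>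
      · rw [Ideal.span_le, Set.singleton_subset_iff]
        simp [RingHom.mem_ker]
  have := hle h1
  rw [RingHom.mem_ker, map_one] at this
  exact one_ne_zero this

end Stmt2Aux

open Stmt2Aux in
/-- For every pair of integers `b₁, c₁`, the polynomials `x₁²`, `x₂(b₁x₁+x₂+x₃)`,
`x₃(c₁x₁+2x₂+x₃)` form a regular sequence in `ℤ[x₁,x₂,x₃]`. -/
theorem stmt_2 (b₁ c₁ : ℤ) :
    RingTheory.Sequence.IsRegular (MvPolynomial (Fin 3) ℤ)
      [(X 0 : MvPolynomial (Fin 3) ℤ) ^ 2,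
        X 1 * (C b₁ * X 0 + X 1 + X 2),
        X 2 * (C c₁ * X 0 + 2 * X 1 + X 2)] := by
  rw [RingTheory.Sequence.isRegular_iff]
  constructor
  · rw [RingTheory.Sequence.isWeaklyRegular_iff]
    intro i hi
    simp only [List.length_cons, List.length_nil] at hi
    interval_cases i
    · refine smul_reg _ _ (fun x hx => ?_)
      rw [smul_top_eq, show (List.take 0 [(X 0 : A) ^ 2, X 1 * (C b₁ * X 0 + X 1 + X 2),
          X 2 * (C c₁ * X 0 + 2 * X 1 + X 2)]) = [] from rfl, Ideal.ofList_nil] at hx ⊢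
      simp only [Ideal.mem_bot, List.getElem_cons_zero] at hx ⊢
      rcases mul_eq_zero.mp hx with h | h
      · exact absurd h (pow_ne_zero _ (X_ne_zero 0))
      · exact h
    · refine smul_reg _ _ (fun x hx => ?_)
      have e : Ideal.ofList (List.take 1 [(X 0 : A) ^ 2, X 1 * (C b₁ * X 0 + X 1 + X 2),
          X 2 * (C c₁ * X 0 + 2 * X 1 + X 2)]) = Ideal.span {(X 0 : A) ^ 2} := by
        rw [show (List.take 1 [(X 0 : A) ^ 2, X 1 * (C b₁ * X 0 + X 1 + X 2),
          X 2 * (C c₁ * X 0 + 2 * X 1 + X 2)]) = [(X 0 : A) ^ 2] from rfl,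
          Ideal.ofList_cons, Ideal.ofList_nil, sup_bot_eq]
      rw [smul_top_eq, e] at hx ⊢
      simp only [List.getElem_cons_succ, List.getElem_cons_zero] at hx ⊢
      exact step2 b₁ x hx
    · refine smul_reg _ _ (fun x hx => ?_)
      have e : Ideal.ofList (List.take 2 [(X 0 : A) ^ 2, X 1 * (C b₁ * X 0 + X 1 + X 2),
          X 2 * (C c₁ * X 0 + 2 * X 1 + X 2)]) =
          Ideal.span {(X 0 : A) ^ 2} ⊔ Ideal.span {X 1 * (C b₁ * X 0 + X 1 + X 2)} := by
        rw [show (List.take 2 [(X 0 : A) ^ 2, X 1 * (C b₁ * X 0 + X 1 + X 2),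
          X 2 * (C c₁ * X 0 + 2 * X 1 + X 2)]) =
            [(X 0 : A) ^ 2, X 1 * (C b₁ * X 0 + X 1 + X 2)] from rfl,
          Ideal.ofList_cons, Ideal.ofList_cons, Ideal.ofList_nil, sup_bot_eq]
      rw [smul_top_eq, e] at hx ⊢
      simp only [List.getElem_cons_succ, List.getElem_cons_zero] at hx ⊢
      exact step3 b₁ c₁ x hx
  · rw [smul_top_eq]
    exact fun hEq => not_top b₁ c₁ hEq.symm
end

section
/- Let K = ℚ(i) be the field of Gaussian rationals, and let H be the subgroup of the multiplicative group K^× generated by the image of ℚ^× together with all cubes x³ for x ∈ K^×. Then the quotient group K^× / H is infinite. -/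
/-- The field `K = ℚ(i)` of Gaussian rationals, realized as the subfield of `ℂ`
obtained by adjoining `i` to `ℚ`. -/
noncomputable def GaussRat : IntermediateField ℚ ℂ :=
  IntermediateField.adjoin ℚ {Complex.I}

/-- The subgroup of `K^×` generated by the image of `ℚ^×` together with all cubes. -/
noncomputable def GaussRatSubgroup : Subgroup (GaussRat)ˣ :=
  Subgroup.closure
    ({u : (GaussRat)ˣ | ∃ q : ℚ, (u : GaussRat) = algebraMap ℚ GaussRat q} ∪
      {u : (GaussRat)ˣ | ∃ x : (GaussRat)ˣ, u = x ^ 3})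

open IntermediateField

noncomputable def gI : GaussRat := ⟨Complex.I, by
  simpa [GaussRat] using IntermediateField.mem_adjoin_simple_self ℚ Complex.I⟩

lemma gI_mul : gI * gI = ((-1 : ℤ) : GaussRat) := by
  apply Subtype.ext
  push_cast [gI]
  simp [Complex.I_mul_I]

noncomputable def f : GaussianInt →+* GaussRat := Zsqrtd.lift ⟨gI, gI_mul⟩

lemma f_apply (x : GaussianInt) : (f x : ℂ) = x.re + x.im * Complex.I := by
  show ((x.re + x.im * gI : GaussRat) : ℂ) = _
  push_cast [gI]
  ring

lemma f_coe (x : GaussianInt) : (f x : ℂ) = GaussianInt.toComplex x := by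
  rw [f_apply, GaussianInt.toComplex_def]

lemma f_inj : Function.Injective f := by
  intro x y h
  have h2 : (f x : ℂ) = (f y : ℂ) := congrArg _ h
  rw [f_coe, f_coe] at h2
  exact GaussianInt.toComplex_inj.mp h2

open GaussianInt in
lemma denom_surj_c (w : ℂ) (hw : w ∈ IntermediateField.adjoin ℚ {Complex.I}) :
    ∃ x y : GaussianInt, y ≠ 0 ∧ w * toComplex y = toComplex x := by
  refine IntermediateField.adjoin_induction ℚ (p := fun w _ => ∃ x y : GaussianInt, y ≠ 0 ∧ w * toComplex y = toComplex x) (fun w hw => ?_) (fun q => ?_) (fun a b _ _ ha hb => ?_)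
    (fun a _ ha => ?_) (fun a b _ _ ha hb => ?_) hw
  · rcases hw with rfl
    exact ⟨⟨0,1⟩, 1, one_ne_zero, by simp [toComplex_def']⟩
  · refine ⟨(q.num : GaussianInt), (q.den : GaussianInt), ?_, ?_⟩
    · exact_mod_cast (Nat.cast_ne_zero (R := GaussianInt)).mpr q.den_nz
    · rw [map_intCast, map_natCast, eq_ratCast (algebraMap ℚ ℂ) q]
      have h0 : (q.den : ℚ) ≠ 0 := by exact_mod_cast q.den_nz
      have h1 : (q : ℚ) * q.den = q.num := (eq_div_iff h0).mp (Rat.num_div_den q).symm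
      exact_mod_cast congrArg ((↑) : ℚ → ℂ) h1
  · obtain ⟨x1, y1, hy1, h1⟩ := ha
    obtain ⟨x2, y2, hy2, h2⟩ := hb
    refine ⟨x1 * y2 + x2 * y1, y1 * y2, mul_ne_zero hy1 hy2, ?_⟩
    simp only [map_mul, map_add]
    linear_combination toComplex y2 * h1 + toComplex y1 * h2
  · obtain ⟨x, y, hy, h⟩ := ha
    by_cases hazero : a = 0
    · exact ⟨0, 1, one_ne_zero, by simp [hazero]⟩
    · have hyc : toComplex y ≠ 0 := by
        simpa [GaussianInt.toComplex_eq_zero] using hy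
      have hx : toComplex x ≠ 0 := by
        rw [← h]; exact mul_ne_zero hazero hyc
      refine ⟨y, x, by simpa [GaussianInt.toComplex_eq_zero] using hx, ?_⟩
      field_simp
      linear_combination -h
  · obtain ⟨x1, y1, hy1, h1⟩ := ha
    obtain ⟨x2, y2, hy2, h2⟩ := hb
    refine ⟨x1 * x2, y1 * y2, mul_ne_zero hy1 hy2, ?_⟩
    simp only [map_mul]
    linear_combination b * toComplex y2 * h1 + toComplex x1 * h2

lemma denom_surj (z : GaussRat) : ∃ x y : GaussianInt, y ≠ 0 ∧ z * f y = f x := by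
  obtain ⟨x, y, hy, h⟩ := denom_surj_c (z : ℂ) z.2
  exact ⟨x, y, hy, Subtype.ext (by push_cast [f_coe]; exact h)⟩

noncomputable instance : Algebra GaussianInt GaussRat := f.toAlgebra

lemma algebraMap_eq_f : (algebraMap GaussianInt GaussRat) = f := rfl

instance : IsFractionRing GaussianInt GaussRat where
  map_units := by
    rintro ⟨y, hy⟩
    rw [algebraMap_eq_f]
    refine isUnit_iff_ne_zero.mpr (fun h => ?_)
    have : y = 0 := f_inj (by simpa using h)
    exact (nonZeroDivisors.ne_zero hy) this
  surj := by
    intro z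
    obtain ⟨x, y, hy, h⟩ := denom_surj z
    exact ⟨(x, ⟨y, mem_nonZeroDivisors_of_ne_zero hy⟩), h⟩
  exists_of_eq := by
    intro x y h
    exact ⟨1, by simpa using f_inj h⟩

lemma conj_mem (z : GaussRat) : (starRingEnd ℂ) (z : ℂ) ∈ GaussRat := by
  have hz := z.2
  show _ ∈ IntermediateField.adjoin ℚ {Complex.I}
  refine IntermediateField.adjoin_induction ℚ
    (p := fun w _ => (starRingEnd ℂ) w ∈ IntermediateField.adjoin ℚ {Complex.I})
    (fun w hw => ?_) (fun q => ?_) (fun a b _ _ ha hb => ?_)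
    (fun a _ ha => ?_) (fun a b _ _ ha hb => ?_) hz
  · rcases hw with rfl
    rw [Complex.conj_I]
    exact neg_mem (IntermediateField.subset_adjoin ℚ {Complex.I} rfl)
  · show (starRingEnd ℂ) ((algebraMap ℚ ℂ) q) ∈ _
    rw [eq_ratCast (algebraMap ℚ ℂ) q, map_ratCast (starRingEnd ℂ) q]
    exact_mod_cast IntermediateField.algebraMap_mem _ q
  · show (starRingEnd ℂ) (a + b) ∈ _
    rw [map_add]; exact add_mem ha hb
  · show (starRingEnd ℂ) a⁻¹ ∈ _
    rw [map_inv₀]; exact inv_mem ha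
  · show (starRingEnd ℂ) (a * b) ∈ _
    rw [map_mul]; exact mul_mem ha hb

noncomputable def cg : GaussRat →+* GaussRat where
  toFun z := ⟨(starRingEnd ℂ) (z : ℂ), conj_mem z⟩
  map_one' := Subtype.ext (by push_cast; simp)
  map_mul' a b := Subtype.ext (by push_cast; simp)
  map_zero' := Subtype.ext (by push_cast; simp)
  map_add' a b := Subtype.ext (by push_cast; simp)

lemma cg_f (x : GaussianInt) : cg (f x) = f (star x) := by
  apply Subtype.ext
  show (starRingEnd ℂ) (f x : ℂ) = _
  rw [f_coe, f_coe, GaussianInt.toComplex_star]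

open GaussianInt

section primes

lemma gp_norm {a b : ℤ} {p : ℕ} (h : a^2 + b^2 = (p:ℤ)) :
    Zsqrtd.norm (⟨a, b⟩ : GaussianInt) = p := by
  rw [Zsqrtd.norm_def]; ring_nf; linear_combination h

lemma gp_ne_zero {a b : ℤ} {p : ℕ} (hp : p.Prime) (h : a^2 + b^2 = (p:ℤ)) :
    (⟨a, b⟩ : GaussianInt) ≠ 0 := by
  intro h0
  have h1 := gp_norm h
  rw [h0] at h1
  simp [Zsqrtd.norm] at h1
  exact hp.ne_zero (by exact_mod_cast h1.symm)

lemma gp_prime {a b : ℤ} {p : ℕ} (hp : p.Prime) (h : a^2 + b^2 = (p:ℤ)) :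
    Prime (⟨a, b⟩ : GaussianInt) := by
  rw [← UniqueFactorizationMonoid.irreducible_iff_prime]
  constructor
  · intro hu
    rw [← Zsqrtd.norm_eq_one_iff, gp_norm h] at hu
    simp at hu
    exact hp.ne_one hu
  · intro u v huv
    have hn : Zsqrtd.norm u * Zsqrtd.norm v = (p : ℤ) := by
      rw [← Zsqrtd.norm_mul, ← huv, gp_norm h]
    have hn' : (Zsqrtd.norm u).natAbs * (Zsqrtd.norm v).natAbs = p := by
      rw [← Int.natAbs_mul, hn, Int.natAbs_natCast]
    rcases (hp.eq_one_or_self_of_dvd (Zsqrtd.norm u).natAbs ⟨_, hn'.symm⟩) with h1 | h1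
    · left; exact Zsqrtd.norm_eq_one_iff.mp h1
    · right
      apply Zsqrtd.norm_eq_one_iff.mp
      rw [h1] at hn'
      exact Nat.eq_of_mul_eq_mul_left hp.pos (hn'.trans (mul_one p).symm)

lemma norm_dvd_of_dvd {x y : GaussianInt} (h : x ∣ y) : Zsqrtd.norm x ∣ Zsqrtd.norm y := by
  obtain ⟨z, rfl⟩ := h
  exact ⟨Zsqrtd.norm z, Zsqrtd.norm_mul x z⟩

lemma not_dvd_of_norm_primes {x y : GaussianInt} {p q : ℕ} (hp : p.Prime) (hq : q.Prime)
    (hne : p ≠ q) (hx : Zsqrtd.norm x = p) (hy : Zsqrtd.norm y = q) : ¬ x ∣ y := by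
  intro h
  have h2 := norm_dvd_of_dvd h
  rw [hx, hy, Int.natCast_dvd_natCast] at h2
  exact hne ((Nat.prime_dvd_prime_iff_eq hp hq).mp h2)

lemma not_dvd_star_self {a b : ℤ} {p : ℕ} (hp : p.Prime) (hodd : p % 2 = 1)
    (h : a^2 + b^2 = (p:ℤ)) : ¬ (⟨a, b⟩ : GaussianInt) ∣ star (⟨a, b⟩ : GaussianInt) := by
  intro hd
  have hpZ : Prime (p : ℤ) := Nat.prime_iff_prime_int.mp hp
  have hp2 : ¬ (p:ℤ) ∣ 2 := by
    intro h2
    rw [show ((2:ℤ) = ((2:ℕ):ℤ)) by norm_num, Int.natCast_dvd_natCast] at h2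
    have := (Nat.prime_dvd_prime_iff_eq hp Nat.prime_two).mp h2
    omega
  have hsum : (⟨a, b⟩ : GaussianInt) + star (⟨a, b⟩ : GaussianInt) = (⟨2*a, 0⟩ : GaussianInt) := by
    rw [Zsqrtd.star_mk]
    ext <;> simp <;> ring
  have h2a : (⟨a, b⟩ : GaussianInt) ∣ (⟨2*a, 0⟩ : GaussianInt) := by
    rw [← hsum]
    exact dvd_add (dvd_refl _) hd
  have hnorm : (p : ℤ) ∣ (2*a)^2 := by
    have h3 := norm_dvd_of_dvd h2a
    rw [gp_norm h] at h3
    convert h3 using 1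
    rw [Zsqrtd.norm_def]; ring
  have hpa : (p:ℤ) ∣ a := by
    rcases hpZ.dvd_mul.mp (hpZ.dvd_of_dvd_pow hnorm) with h' | h'
    · exact absurd h' hp2
    · exact h'
  have hpb : (p:ℤ) ∣ b := by
    apply hpZ.dvd_of_dvd_pow (n := 2)
    have hb2 : b^2 = (p:ℤ) - a^2 := by linarith
    rw [hb2]
    exact dvd_sub (dvd_refl _) (dvd_pow hpa two_ne_zero)
  obtain ⟨a', rfl⟩ := hpa
  obtain ⟨b', rfl⟩ := hpb
  have hdvd : (p:ℤ)^2 ∣ (p:ℤ) := by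
    exact ⟨a'^2 + b'^2, by linear_combination -h⟩
  have hle : (p:ℤ)^2 ≤ p := Int.le_of_dvd (by exact_mod_cast hp.pos) hdvd
  have h2 : (2:ℤ) ≤ p := by exact_mod_cast hp.two_le
  nlinarith

end primes

open IsDedekindDomain IsDedekindDomain.HeightOneSpectrum Multiplicative WithZero

noncomputable def hos {π : GaussianInt} (hπ : Prime π) : HeightOneSpectrum GaussianInt where
  asIdeal := Ideal.span {π}
  isPrime := (Ideal.span_singleton_prime hπ.ne_zero).mpr hπ
  ne_bot := by simpa only [Ne, Ideal.span_singleton_eq_bot] using hπ.ne_zero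

noncomputable def V (v : HeightOneSpectrum GaussianInt) : GaussRatˣ →* Multiplicative ℤ :=
  (WithZero.unitsWithZeroEquiv.toMonoidHom).comp
    (Units.map ((v.valuation GaussRat : Valuation GaussRat ℤᵐ⁰)).toMonoidHom)

lemma V_eq {v : HeightOneSpectrum GaussianInt} {u : GaussRatˣ} {c : Multiplicative ℤ}
    (h : (v.valuation GaussRat : Valuation GaussRat ℤᵐ⁰) (u : GaussRat) = (c : ℤᵐ⁰)) : V v u = c := by
  have : ((V v u : Multiplicative ℤ) : ℤᵐ⁰) = (v.valuation GaussRat : Valuation GaussRat ℤᵐ⁰) (u : GaussRat) := by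
    simp [V, WithZero.unitsWithZeroEquiv]
  rw [h] at this
  exact_mod_cast this

noncomputable def cgu : GaussRatˣ →* GaussRatˣ := Units.map cg.toMonoidHom

noncomputable def χ (v : HeightOneSpectrum GaussianInt) : GaussRatˣ →* Multiplicative (ZMod 3) where
  toFun u := ofAdd (((toAdd (V v u) - toAdd (V v (cgu u)) : ℤ) : ZMod 3))
  map_one' := by simp
  map_mul' a b := by
    simp only [map_mul, toAdd_mul, ← ofAdd_add]
    congr 1
    push_cast
    ring

lemma cg_ratCast (q : ℚ) : cg (algebraMap ℚ GaussRat q) = algebraMap ℚ GaussRat q := by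
  apply Subtype.ext
  show (starRingEnd ℂ) ((algebraMap ℚ GaussRat q : GaussRat) : ℂ) = _
  have hcoe : ((algebraMap ℚ GaussRat q : GaussRat) : ℂ) = (q : ℂ) := by
    simp
  rw [hcoe, map_ratCast]

lemma χ_ker (v : HeightOneSpectrum GaussianInt) : GaussRatSubgroup ≤ (χ v).ker := by
  rw [show GaussRatSubgroup = Subgroup.closure
    ({u : (GaussRat)ˣ | ∃ q : ℚ, (u : GaussRat) = algebraMap ℚ GaussRat q} ∪
      {u : (GaussRat)ˣ | ∃ x : (GaussRat)ˣ, u = x ^ 3}) from rfl, Subgroup.closure_le]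
  rintro u (⟨q, hq⟩ | ⟨x, rfl⟩)
  · have hcg : cgu u = u := by
      apply Units.ext
      show cg (u : GaussRat) = (u : GaussRat)
      rw [hq, cg_ratCast]
    show χ v u = 1
    show ofAdd (((toAdd (V v u) - toAdd (V v (cgu u)) : ℤ) : ZMod 3)) = 1
    rw [hcg, sub_self]
    simp
  · show χ v (x ^ 3) = 1
    rw [map_pow]
    exact (by decide : ∀ g : Multiplicative (ZMod 3), g ^ 3 = 1) _

lemma f_ne_zero {x : GaussianInt} (hx : x ≠ 0) : f x ≠ 0 := by
  intro h
  exact hx (f_inj (by rw [h, map_zero]))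

lemma val_f (v : HeightOneSpectrum GaussianInt) (x : GaussianInt) :
    (v.valuation GaussRat : Valuation GaussRat ℤᵐ⁰) (f x) = v.intValuationDef x := by
  rw [← algebraMap_eq_f, valuation_of_algebraMap]
  rfl

lemma intVal_self {π : GaussianInt} (hπ : Prime π) :
    (hos hπ).intValuationDef π = (ofAdd (-1 : ℤ) : Multiplicative ℤ) := by
  rw [← intValuation_apply]
  exact intValuation_singleton _ hπ.ne_zero rfl

lemma intVal_not_dvd {π y : GaussianInt} (hπ : Prime π) (h : ¬ π ∣ y) :
    (hos hπ).intValuationDef y = (ofAdd (0 : ℤ) : Multiplicative ℤ) := by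
  have hle := (hos hπ).intValuation_le_one y
  have hnlt : ¬ (hos hπ).intValuationDef y < 1 := by
    rw [← intValuation_apply, intValuation_lt_one_iff_dvd]
    show ¬ Ideal.span {π} ∣ Ideal.span {y}
    rw [span_singleton_dvd_span_singleton_iff_dvd]
    exact h
  exact le_antisymm hle (not_lt.mp hnlt)

lemma cgu_mk0 {y : GaussianInt} (hy : y ≠ 0) :
    cgu (Units.mk0 (f y) (f_ne_zero hy)) =
      Units.mk0 (f (star y)) (f_ne_zero (star_ne_zero.mpr hy)) := by
  apply Units.ext
  show cg (f y) = f (star y)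
  exact cg_f y

lemma χ_self {π : GaussianInt} (hπ : Prime π) (hstar : ¬ π ∣ star π) :
    χ (hos hπ) (Units.mk0 (f π) (f_ne_zero hπ.ne_zero)) = ofAdd ((-1 : ℤ) : ZMod 3) := by
  show ofAdd _ = _
  rw [cgu_mk0 hπ.ne_zero]
  have h1 : V (hos hπ) (Units.mk0 (f π) (f_ne_zero hπ.ne_zero)) = ofAdd (-1 : ℤ) :=
    V_eq (by rw [Units.val_mk0, val_f, intVal_self hπ])
  have h2 : V (hos hπ) (Units.mk0 (f (star π)) (f_ne_zero (star_ne_zero.mpr hπ.ne_zero))) =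
      ofAdd (0 : ℤ) :=
    V_eq (by rw [Units.val_mk0, val_f, intVal_not_dvd hπ hstar])
  rw [h1, h2]
  congr 1

lemma χ_other {π y : GaussianInt} (hπ : Prime π) (hy : y ≠ 0) (h1 : ¬ π ∣ y)
    (h2 : ¬ π ∣ star y) :
    χ (hos hπ) (Units.mk0 (f y) (f_ne_zero hy)) = 1 := by
  show ofAdd _ = _
  rw [cgu_mk0 hy]
  have hv1 : V (hos hπ) (Units.mk0 (f y) (f_ne_zero hy)) = ofAdd (0 : ℤ) :=
    V_eq (by rw [Units.val_mk0, val_f, intVal_not_dvd hπ h1])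
  have hv2 : V (hos hπ) (Units.mk0 (f (star y)) (f_ne_zero (star_ne_zero.mpr hy))) =
      ofAdd (0 : ℤ) :=
    V_eq (by rw [Units.val_mk0, val_f, intVal_not_dvd hπ h2])
  rw [hv1, hv2]
  show ofAdd _ = ofAdd (0 : ZMod 3)
  congr 1

lemma exists_pi (p : ℕ) (hp : p.Prime) (h4 : p % 4 = 1) :
    ∃ x : GaussianInt, Prime x ∧ Zsqrtd.norm x = p ∧ ¬ x ∣ star x := by
  haveI : Fact p.Prime := ⟨hp⟩
  obtain ⟨a, b, hab⟩ := Nat.Prime.sq_add_sq (p := p) (by omega)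
  have h : (a:ℤ)^2 + (b:ℤ)^2 = (p:ℤ) := by exact_mod_cast hab
  exact ⟨⟨a, b⟩, gp_prime hp h, gp_norm h, not_dvd_star_self hp (by omega) h⟩

theorem stmt_6'aux : Infinite ((GaussRat)ˣ ⧸ GaussRatSubgroup) := by
  have hinf : {p : ℕ | p.Prime ∧ p % 4 = 1}.Infinite := by
    apply Set.infinite_of_not_bddAbove
    rintro ⟨n, hn⟩
    obtain ⟨p, hp, hgt, hmod⟩ := Nat.exists_prime_gt_modEq_one (k := 4) n (by norm_num)
    have hp4 : p % 4 = 1 := by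
      have := hmod
      unfold Nat.ModEq at this
      omega
    exact absurd (hn ⟨hp, hp4⟩) (by omega)
  haveI : Infinite {p : ℕ | p.Prime ∧ p % 4 = 1} := hinf.to_subtype
  have hchoice := fun s : {p : ℕ | p.Prime ∧ p % 4 = 1} => exists_pi s.1 s.2.1 s.2.2
  choose x hx1 hx2 hx3 using hchoice
  refine Infinite.of_injective
    (fun s => (QuotientGroup.mk (Units.mk0 (f (x s)) (f_ne_zero (hx1 s).ne_zero)) :
      (GaussRat)ˣ ⧸ GaussRatSubgroup)) ?_
  intro s t hst
  by_contra hne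
  have hne' : s.1 ≠ t.1 := fun h => hne (Subtype.ext h)
  have hmem := QuotientGroup.eq.mp hst
  have hker := χ_ker (hos (hx1 s)) hmem
  rw [MonoidHom.mem_ker, map_mul, map_inv] at hker
  have hself := χ_self (hx1 s) (hx3 s)
  have hother : χ (hos (hx1 s)) (Units.mk0 (f (x t)) (f_ne_zero (hx1 t).ne_zero)) = 1 := by
    apply χ_other (hx1 s) (hx1 t).ne_zero
    · exact not_dvd_of_norm_primes s.2.1 t.2.1 hne' (hx2 s) (hx2 t)
    · exact not_dvd_of_norm_primes s.2.1 t.2.1 hne' (hx2 s)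
        ((Zsqrtd.norm_conj (x t)) ▸ hx2 t)
  rw [hself, hother] at hker
  rw [mul_one] at hker
  have : (ofAdd ((-1 : ℤ) : ZMod 3)) = 1 := by
    rw [← inv_inv (ofAdd ((-1 : ℤ) : ZMod 3)), hker]
    simp
  exact absurd this (by decide)

/-- The quotient group `K^×/H`, where `K = ℚ(i)` and `H` is generated by `ℚ^×` and the
cubes, is infinite. -/
theorem stmt_6 : Infinite ((GaussRat)ˣ ⧸ GaussRatSubgroup) := by
  exact stmt_6'aux
end

section
/- Let K = ℚ(i) be the field of Gaussian rationals, and let H be the subgroup of the multiplicative group K^× generated by the image of ℚ^× together with all cubes x³ for x ∈ K^×. Then for every x ∈ K^×, there exist integers a and b, not both zero, such that x · (4(a + bi)²)⁻¹ ∈ H. (That is, every class in K^×/H is represented by an element of the form 4(a + bi)² with a, b integers not both zero.) -/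
/-- The element `i` of `K = ℚ(i)`. -/
noncomputable def GaussRatI : GaussRat :=
  ⟨Complex.I, IntermediateField.subset_adjoin ℚ {Complex.I} rfl⟩

lemma I_integral : IsIntegral ℚ Complex.I := by
  refine ⟨Polynomial.X ^ 2 + 1, ?_, ?_⟩
  · apply Polynomial.monic_X_pow_add
    simp
  · simp [Polynomial.eval₂, Complex.I_sq]

lemma mem_gaussRat (z : ℂ) (hz : z ∈ GaussRat) : ∃ a b : ℚ, z = a + b * Complex.I := by
  have h1 : GaussRat.toSubalgebra = Algebra.adjoin ℚ {Complex.I} := by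
    have := IntermediateField.adjoin_simple_toSubalgebra_of_isAlgebraic I_integral.isAlgebraic
    simpa [GaussRat] using this
  have h2 : z ∈ Algebra.adjoin ℚ {Complex.I} := by
    rw [← h1]; exact hz
  let S : Subalgebra ℚ ℂ :=
  { carrier := {w | ∃ a b : ℚ, w = a + b * Complex.I}
    mul_mem' := by
      rintro _ _ ⟨a, b, rfl⟩ ⟨c, d, rfl⟩
      refine ⟨a*c - b*d, a*d + b*c, ?_⟩
      push_cast
      have : Complex.I ^ 2 = -1 := Complex.I_sq
      linear_combination ((b:ℂ)*d) * this
    add_mem' := by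
      rintro _ _ ⟨a, b, rfl⟩ ⟨c, d, rfl⟩
      exact ⟨a+c, b+d, by push_cast; ring⟩
    algebraMap_mem' := fun q => ⟨q, 0, by simp⟩ }
  have h3 : Algebra.adjoin ℚ {Complex.I} ≤ S := by
    apply Algebra.adjoin_le
    rintro _ rfl
    exact ⟨0, 1, by simp⟩
  exact h3 h2

lemma gr_coe_GI : ((GaussRatI : GaussRat) : ℂ) = Complex.I := rfl

lemma gr_coe_four : ((4 : GaussRat) : ℂ) = 4 := by
  exact_mod_cast SubringClass.coe_intCast (s := GaussRat) 4

lemma gr_coe_form (A B : ℤ) :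
    ((4 * ((A : GaussRat) + (B : GaussRat) * GaussRatI) ^ 2 : GaussRat) : ℂ)
      = 4 * ((A : ℂ) + (B : ℂ) * Complex.I) ^ 2 := by
  push_cast [gr_coe_GI]
  rw [gr_coe_four]

/-- Every class in `K^×/H` is represented by an element of the form `4(a + bi)²`
with `a, b` integers, not both zero. -/
theorem stmt_7 (x : (GaussRat)ˣ) :
    ∃ (a b : ℤ) (u : (GaussRat)ˣ),
      ¬(a = 0 ∧ b = 0) ∧
      (u : GaussRat) = 4 * ((a : GaussRat) + (b : GaussRat) * GaussRatI) ^ 2 ∧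
      x * u⁻¹ ∈ GaussRatSubgroup := by
  obtain ⟨a, b, hab⟩ := mem_gaussRat ((x : GaussRat) : ℂ) (x : GaussRat).2
  set n : ℤ := (a.den : ℤ) * (b.den : ℤ) with hn
  have hnz : n ≠ 0 := by positivity
  have hn0 : (n : GaussRat) ≠ 0 := by
    intro h
    apply hnz
    have := congrArg (fun t : GaussRat => (t : ℂ)) h
    push_cast at this
    exact_mod_cast this
  set a' : ℤ := a.num * b.den with ha'
  set b' : ℤ := b.num * a.den with hb'
  set nU : (GaussRat)ˣ := Units.mk0 (n : GaussRat) hn0 with hnU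
  have h4 : (4 : GaussRat) ≠ 0 := by
    intro h
    have := congrArg (fun t : GaussRat => (t : ℂ)) h
    simp only [gr_coe_four] at this
    norm_num at this
  set fU : (GaussRat)ˣ := Units.mk0 (4 : GaussRat) h4 with hfU
  set z : (GaussRat)ˣ := nU * x with hz
  have hnum_a : (a.num : ℂ) = (a : ℂ) * (a.den : ℂ) := by
    exact_mod_cast congrArg (Rat.cast : ℚ → ℂ) (Rat.mul_den_eq_num a).symm
  have hnum_b : (b.num : ℂ) = (b : ℂ) * (b.den : ℂ) := by
    exact_mod_cast congrArg (Rat.cast : ℚ → ℂ) (Rat.mul_den_eq_num b).symm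
  have hzval : ((z : GaussRat) : ℂ) = (a' : ℂ) + (b' : ℂ) * Complex.I := by
    have h1 : ((z : GaussRat) : ℂ) = (n : ℂ) * (((x : GaussRat)) : ℂ) := by
      rw [hz, Units.val_mul, hnU]
      simp only [Units.val_mk0]
      push_cast
      ring
    rw [h1, hab, hn, ha', hb']
    push_cast
    rw [hnum_a, hnum_b]
    ring
  have hI : Complex.I ^ 2 = -1 := Complex.I_sq
  have hz0 : ((z : GaussRat) : ℂ) ≠ 0 := fun h => z.ne_zero (Subtype.ext h)
  have hsq : ((z : GaussRat) : ℂ) ^ 2 =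
      ((a' ^ 2 - b' ^ 2 : ℤ) : ℂ) + ((2 * a' * b' : ℤ) : ℂ) * Complex.I := by
    rw [hzval]; push_cast
    linear_combination ((b' : ℂ) ^ 2) * hI
  refine ⟨a' ^ 2 - b' ^ 2, 2 * a' * b', fU * z ^ 4, ?_, ?_, ?_⟩
  · rintro ⟨hA, hB⟩
    have h2 : ((z : GaussRat) : ℂ) ^ 2 = 0 := by
      rw [hsq, hA, hB]; push_cast; ring
    exact hz0 (pow_eq_zero_iff (n := 2) (by norm_num) |>.mp h2)
  · have hval : ((((fU * z ^ 4 : (GaussRat)ˣ) : GaussRat)) : ℂ)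
        = 4 * (((z : GaussRat) : ℂ) ^ 2) ^ 2 := by
      rw [Units.val_mul, Units.val_pow_eq_pow_val]
      push_cast
      rw [hfU]
      simp only [Units.val_mk0, gr_coe_four]
      ring
    apply Subtype.coe_injective
    show ((((fU * z ^ 4 : (GaussRat)ˣ) : GaussRat)) : ℂ) = _
    rw [hval, hsq]
    exact (gr_coe_form (a' ^ 2 - b' ^ 2) (2 * a' * b')).symm
  · have heq : x * (fU * z ^ 4)⁻¹ = (nU⁻¹ * fU⁻¹) * (z⁻¹) ^ 3 := by
      apply Units.ext
      have hxne : (x : GaussRat) ≠ 0 := x.ne_zero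
      have hzne : ((z : GaussRat)) ≠ 0 := z.ne_zero
      push_cast [Units.val_inv_eq_inv_val, hz]
      field_simp
    rw [heq]
    unfold GaussRatSubgroup
    refine mul_mem (mul_mem ?_ ?_) ?_
    · apply Subgroup.subset_closure
      refine Set.mem_union_left _ ⟨((n : ℚ))⁻¹, ?_⟩
      rw [map_inv₀]
      have h1 : algebraMap ℚ GaussRat ((n : ℚ)) = (n : GaussRat) := by norm_cast
      rw [h1, Units.val_inv_eq_inv_val, hnU, Units.val_mk0]
    · apply Subgroup.subset_closure
      refine Set.mem_union_left _ ⟨(4 : ℚ)⁻¹, ?_⟩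
      rw [map_inv₀]
      have h1 : algebraMap ℚ GaussRat ((4 : ℚ)) = (4 : GaussRat) := by norm_cast
      rw [h1, Units.val_inv_eq_inv_val, hfU, Units.val_mk0]
    · exact Subgroup.subset_closure (Set.mem_union_right _ ⟨z⁻¹, rfl⟩)
end

section
/- Let F : ℚ⁵ → ℚ be the Klein cubic form F(v) = v₀²v₁ + v₁²v₂ + v₂²v₃ + v₃²v₄ + v₄²v₀ and T its polarization. Let a₀, a₁ be nonzero rational numbers, and set y = a₀e₀ − a₁e₁ + (a₁³/a₀²)e₃ and z = a₀e₀ + a₁e₁ + (a₀²/a₁)e₂, where e₀,…,e₄ is the standard basis of ℚ⁵. Then the set { v ∈ ℚ⁵ : T(y, v, w) = 0 for all w ∈ ℚ⁵ } equals the line ℚ·z spanned by z. (That is, multiplication by y has one-dimensional kernel spanned by z.) -/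
/-- The Klein cubic form `F(v) = v₀²v₁ + v₁²v₂ + v₂²v₃ + v₃²v₄ + v₄²v₀` on `ℚ⁵`. -/
def kleinCubic (v : Fin 5 → ℚ) : ℚ :=
  v 0 ^ 2 * v 1 + v 1 ^ 2 * v 2 + v 2 ^ 2 * v 3 + v 3 ^ 2 * v 4 + v 4 ^ 2 * v 0

/-- The polarization of the Klein cubic: the symmetric trilinear form `T` with
`T(v,v,v) = F(v)`. -/
def kleinTrilinear (u v w : Fin 5 → ℚ) : ℚ :=
  (1 / 6) * (kleinCubic (u + v + w) - kleinCubic (u + v) - kleinCubic (u + w)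
    - kleinCubic (v + w) + kleinCubic u + kleinCubic v + kleinCubic w)

lemma tri_eq (u v w : Fin 5 → ℚ) :
    kleinTrilinear u v w = (1/3) * (
      (u 0 * v 0 * w 1 + u 0 * w 0 * v 1 + v 0 * w 0 * u 1) +
      (u 1 * v 1 * w 2 + u 1 * w 1 * v 2 + v 1 * w 1 * u 2) +
      (u 2 * v 2 * w 3 + u 2 * w 2 * v 3 + v 2 * w 2 * u 3) +
      (u 3 * v 3 * w 4 + u 3 * w 3 * v 4 + v 3 * w 3 * u 4) +
      (u 4 * v 4 * w 0 + u 4 * w 4 * v 0 + v 4 * w 4 * u 0)) := by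
  simp only [kleinTrilinear, kleinCubic, Pi.add_apply]
  ring

/-- For nonzero rationals `a₀, a₁`, with `y = a₀e₀ − a₁e₁ + (a₁³/a₀²)e₃` and
`z = a₀e₀ + a₁e₁ + (a₀²/a₁)e₂`, multiplication by `y` (in the sense of the trilinear
form `T`) has one-dimensional kernel, spanned by `z`. -/
theorem stmt_9 (a₀ a₁ : ℚ) (h₀ : a₀ ≠ 0) (h₁ : a₁ ≠ 0) :
    {v : Fin 5 → ℚ | ∀ w : Fin 5 → ℚ,
        kleinTrilinear ![a₀, -a₁, 0, a₁ ^ 3 / a₀ ^ 2, 0] v w = 0} =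
      {v : Fin 5 → ℚ | ∃ c : ℚ, v = c • ![a₀, a₁, a₀ ^ 2 / a₁, 0, 0]} := by
  ext v
  simp only [Set.mem_setOf_eq]
  constructor
  · intro h
    have e0 := h ![1,0,0,0,0]
    have e1 := h ![0,1,0,0,0]
    have e2 := h ![0,0,1,0,0]
    have e3 := h ![0,0,0,1,0]
    have e4 := h ![0,0,0,0,1]
    simp only [tri_eq, Matrix.cons_val_zero, Matrix.cons_val_one, Matrix.head_cons,
      Matrix.cons_val_two, Matrix.tail_cons, Matrix.cons_val_three, Matrix.cons_val_four,
      mul_zero, zero_mul, mul_one, add_zero, zero_add, mul_neg, neg_mul] at e0 e1 e2 e3 e4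
    refine ⟨v 0 / a₀, ?_⟩
    have ha : a₁ ^ 3 / a₀ ^ 2 ≠ 0 := by positivity
    have h4 : v 4 = 0 := by
      have : a₁ ^ 3 / a₀ ^ 2 * v 4 = 0 := by linarith
      exact (mul_eq_zero.mp this).resolve_left ha
    have h3 : v 3 = 0 := by
      rw [h4] at e4
      have : a₁ ^ 3 / a₀ ^ 2 * v 3 = 0 := by linarith
      exact (mul_eq_zero.mp this).resolve_left ha
    funext i
    fin_cases i <;>
      simp [Matrix.cons_val_zero, Matrix.cons_val_one, Matrix.head_cons, h3, h4,
        div_mul_eq_mul_div] <;> field_simp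
    · linear_combination (3 : ℚ) * e0
    · linear_combination (-3 : ℚ) * e1
  · rintro ⟨c, rfl⟩
    intro w
    rw [tri_eq]
    simp only [Pi.smul_apply, Matrix.cons_val_zero, Matrix.cons_val_one, Matrix.head_cons,
      Matrix.cons_val_two, Matrix.tail_cons, Matrix.cons_val_three, Matrix.cons_val_four,
      smul_eq_mul]
    field_simp
    ring
end

section
/- Let F : ℚ⁵ → ℚ be the Klein cubic form F(v) = v₀²v₁ + v₁²v₂ + v₂²v₃ + v₃²v₄ + v₄²v₀ and T its polarization. Let a₀, a₁ be nonzero rational numbers, set a₂ = a₀²/a₁, z = a₀e₀ + a₁e₁ + a₂e₂, and y = a₀e₀ − a₁e₁ + (a₁³/a₀²)e₃, where e₀,…,e₄ is the standard basis of ℚ⁵. Consider the symmetric bilinear form B(u,v) = T(u,v,z) on ℚ⁵. Then: (1) the radical { v ∈ ℚ⁵ : B(u,v) = 0 for all u ∈ ℚ⁵ } equals the line ℚ·y; and (2) the determinant of the 4×4 matrix (3·T(eᵢ, eⱼ, z)) for i, j ∈ {1,2,3,4} equals −a₂³a₀, whose class in ℚ^×/(ℚ^×)² coincides with the class of −a₀a₁.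 -/
lemma kt_eq (u v w : Fin 5 → ℚ) : kleinTrilinear u v w =
    (1/3) * ((u 0*v 0*w 1 + u 0*w 0*v 1 + v 0*w 0*u 1)
      + (u 1*v 1*w 2 + u 1*w 1*v 2 + v 1*w 1*u 2)
      + (u 2*v 2*w 3 + u 2*w 2*v 3 + v 2*w 2*u 3)
      + (u 3*v 3*w 4 + u 3*w 3*v 4 + v 3*w 3*u 4)
      + (u 4*v 4*w 0 + u 4*w 4*v 0 + v 4*w 4*u 0)) := by
  simp only [kleinTrilinear, kleinCubic, Pi.add_apply]; ring

/-- For nonzero rationals `a₀, a₁`, set `a₂ = a₀²/a₁`, `z = a₀e₀ + a₁e₁ + a₂e₂` and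
`y = a₀e₀ − a₁e₁ + (a₁³/a₀²)e₃`, and let `B(u,v) = T(u,v,z)`. Then (1) the radical of
`B` is the line spanned by `y`, and (2) the determinant of the lower-right `4×4` minor
`(3·T(eᵢ,eⱼ,z))_{i,j∈{1,2,3,4}}` equals `−a₂³a₀`, which agrees with `−a₀a₁` in
`ℚ^×/(ℚ^×)²`. -/
theorem stmt_10 (a₀ a₁ : ℚ) (h₀ : a₀ ≠ 0) (h₁ : a₁ ≠ 0) :
    ({v : Fin 5 → ℚ | ∀ u : Fin 5 → ℚ,
        kleinTrilinear u v ![a₀, a₁, a₀ ^ 2 / a₁, 0, 0] = 0} =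
      {v : Fin 5 → ℚ | ∃ c : ℚ, v = c • ![a₀, -a₁, 0, a₁ ^ 3 / a₀ ^ 2, 0]}) ∧
    (Matrix.det (Matrix.of fun i j : Fin 4 =>
        3 * kleinTrilinear (Pi.single i.succ 1) (Pi.single j.succ 1)
          ![a₀, a₁, a₀ ^ 2 / a₁, 0, 0]) = -(a₀ ^ 2 / a₁) ^ 3 * a₀) ∧
    (∃ r : ℚ, r ≠ 0 ∧ -(a₀ ^ 2 / a₁) ^ 3 * a₀ = r ^ 2 * (-(a₀ * a₁))) := by
  refine ⟨?_, ?_, ?_⟩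
  · ext v
    simp only [Set.mem_setOf_eq]
    constructor
    · intro hv
      have h0 := hv (Pi.single 0 1)
      have h1 := hv (Pi.single 1 1)
      have h2 := hv (Pi.single 2 1)
      have h3 := hv (Pi.single 3 1)
      have h4 := hv (Pi.single 4 1)
      simp only [kt_eq, Pi.single_apply, Matrix.cons_val] at h0 h1 h2 h3 h4
      norm_num [Fin.ext_iff, show ((2:Fin 5):ℕ)=2 from rfl, show ((3:Fin 5):ℕ)=3 from rfl,
        show ((4:Fin 5):ℕ)=4 from rfl] at h0 h1 h2 h3 h4
      refine ⟨v 0 / a₀, ?_⟩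
      funext x
      fin_cases x <;>
        simp only [show (⟨0, by omega⟩:Fin 5) = 0 from rfl, show (⟨1, by omega⟩:Fin 5) = 1 from rfl,
          show (⟨2, by omega⟩:Fin 5) = 2 from rfl, show (⟨3, by omega⟩:Fin 5) = 3 from rfl,
          show (⟨4, by omega⟩:Fin 5) = 4 from rfl, Pi.smul_apply, smul_eq_mul, Matrix.cons_val] <;>
        norm_num
      · field_simp
      · field_simp; linear_combination h0
      · tauto
      · have e2 : v 2 = 0 := by tauto
        field_simp at h2
        field_simp
        linear_combination a₀*h2 - a₁^2*h0
      · tauto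
    · rintro ⟨c, rfl⟩ u
      simp only [kt_eq, Pi.smul_apply, smul_eq_mul, Matrix.cons_val]
      norm_num
      field_simp
      ring
  · have hM : (Matrix.of fun i j : Fin 4 =>
          3 * kleinTrilinear (Pi.single i.succ 1) (Pi.single j.succ 1)
            ![a₀, a₁, a₀ ^ 2 / a₁, 0, 0]) =
        !![a₀^2/a₁, a₁, 0, 0; a₁, 0, a₀^2/a₁, 0; 0, a₀^2/a₁, 0, 0; 0, 0, 0, a₀] := by
      ext i j
      fin_cases i <;> fin_cases j <;>
        simp [kt_eq, Pi.single_apply] <;>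
        norm_num [Matrix.vecHead, Matrix.vecTail, show ((3:Fin 5):ℕ)=3 from rfl,
          show ((4:Fin 5):ℕ)=4 from rfl, show ((3:Fin 4):ℕ)=3 from rfl,
          show ((2:Fin 4):ℕ)=2 from rfl]
    rw [hM]
    simp [Matrix.det_succ_row_zero, Fin.sum_univ_succ]
    field_simp
  · refine ⟨a₀^3 / a₁^2, by positivity, ?_⟩
    field_simp
end

section
/- Let A = (a_{ij}) be a 4×4 lower-triangular matrix of integers with all diagonal entries equal to 1 (so a_{ii} = 1 and a_{ij} = 0 for j > i). Then the action of Circle⁴ on (S³)⁴ given by (λ₁,λ₂,λ₃,λ₄)·((u₁,v₁),…,(u₄,v₄)) = ((λ₁u₁, (∏ⱼ λⱼ^{a_{1j}})v₁), …, (λ₄u₄, (∏ⱼ λⱼ^{a_{4j}})v₄)) is free: for all λ₁,…,λ₄ ∈ ℂ with |λᵢ| = 1 and all (u₁,v₁),…,(u₄,v₄) ∈ ℂ² with |uᵢ|² + |vᵢ|² = 1 for i = 1,…,4, if λᵢuᵢ = uᵢ and (∏ⱼ λⱼ^{a_{ij}})vᵢ = vᵢ for every i, then λ₁ = λ₂ =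 λ₃ = λ₄ = 1. -/
/-- For a 4×4 lower-triangular integer matrix `A` with 1's on the diagonal, the action of
`Circle⁴` on `(S³)⁴` given by
`(λ₁,…,λ₄)·((u₁,v₁),…,(u₄,v₄)) = ((λ₁u₁, (∏ⱼλⱼ^{a₁ⱼ})v₁),…,(λ₄u₄, (∏ⱼλⱼ^{a₄ⱼ})v₄))`
is free. -/
theorem stmt_11 (A : Matrix (Fin 4) (Fin 4) ℤ)
    (hdiag : ∀ i, A i i = 1) (htri : ∀ i j, i < j → A i j = 0)
    (l u v : Fin 4 → ℂ)
    (hl : ∀ i, ‖l i‖ = 1)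
    (huv : ∀ i, ‖u i‖ ^ 2 + ‖v i‖ ^ 2 = 1)
    (hu : ∀ i, l i * u i = u i)
    (hv : ∀ i, (∏ j, l j ^ A i j) * v i = v i) :
    ∀ i, l i = 1 := by
  have key : ∀ i : Fin 4, (∀ j, j < i → l j = 1) → l i = 1 := by
    intro i prev
    rcases eq_or_ne (u i) 0 with h | h
    · -- u i = 0, so v i ≠ 0
      have hv0 : v i ≠ 0 := by
        intro hv0
        have := huv i
        rw [h, hv0] at this
        simp at this
      have hprod : (∏ j, l j ^ A i j) = l i := by
        rw [← Finset.mul_prod_erase _ _ (Finset.mem_univ i), hdiag, zpow_one]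
        have : (∏ j ∈ Finset.univ.erase i, l j ^ A i j) = 1 := by
          refine Finset.prod_eq_one fun j hj => ?_
          rcases lt_or_gt_of_ne (Finset.ne_of_mem_erase hj) with h' | h'
          · rw [prev j h', one_zpow]
          · rw [htri i j h', zpow_zero]
        rw [this, mul_one]
      have := hv i
      rw [hprod] at this
      have : l i * v i = 1 * v i := by rw [this, one_mul]
      exact mul_right_cancel₀ hv0 this
    · have : l i * u i = 1 * u i := by rw [hu i, one_mul]
      exact mul_right_cancel₀ h this
  have h0 : l 0 = 1 := key 0 (fun j hj => absurd hj (by omega))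
  have h1 : l 1 = 1 := key 1 (fun j hj => by
    have : j = 0 := by omega
    rw [this]; exact h0)
  have h2 : l 2 = 1 := key 2 (fun j hj => by
    have : j = 0 ∨ j = 1 := by omega
    rcases this with h | h <;> rw [h] <;> assumption)
  have h3 : l 3 = 1 := key 3 (fun j hj => by
    have : j = 0 ∨ j = 1 ∨ j = 2 := by omega
    rcases this with h | h | h <;> rw [h] <;> assumption)
  intro i
  have : i = 0 ∨ i = 1 ∨ i = 2 ∨ i = 3 := by omega
  rcases this with h | h | h | h <;> rw [h] <;> assumption
end

section
/- For any integers a₂₁, a₃₁, a₃₂, a₄₁, a₄₂, a₄₃, the four polynomials x₁², x₂(a₂₁x₁ + x₂), x₃(a₃₁x₁ + a₃₂x₂ + x₃), and x₄(a₄₁x₁ + a₄₂x₂ + a₄₃x₃ + x₄) form a regular sequence in the polynomial ring ℤ[x₁, x₂, x₃, x₄]. -/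
open MvPolynomial

section Helpers

lemma aux_monic_mem_map_C {A : Type*} [CommRing A] (I : Ideal A) {p q : Polynomial A}
    (hp : p.Monic) (h : p * q ∈ I.map (Polynomial.C : A →+* Polynomial A)) :
    q ∈ I.map (Polynomial.C : A →+* Polynomial A) := by
  have hker : I.map (Polynomial.C : A →+* Polynomial A)
      = RingHom.ker (Polynomial.mapRingHom (Ideal.Quotient.mk I)) := by
    rw [Polynomial.ker_mapRingHom, Ideal.mk_ker]
  rw [hker, RingHom.mem_ker] at h ⊢
  rw [map_mul] at h
  exact ((hp.map (Ideal.Quotient.mk I)).mul_right_eq_zero_iff).mp h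

lemma aux_smul_reg_of_mul_mem {R : Type*} [CommRing R] (I : Ideal R) (r : R)
    (h : ∀ g : R, r * g ∈ I → g ∈ I) :
    IsSMulRegular (R ⧸ (I • (⊤ : Submodule R R))) r := by
  have hI : (I • (⊤ : Submodule R R)) = I := by
    rw [Ideal.smul_eq_mul, Ideal.mul_top]
  intro x y hxy
  obtain ⟨a, rfl⟩ := Submodule.Quotient.mk_surjective _ x
  obtain ⟨b, rfl⟩ := Submodule.Quotient.mk_surjective _ y
  have hxy' : Submodule.Quotient.mk (p := I • (⊤ : Submodule R R)) (r • a)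
      = Submodule.Quotient.mk (r • b) := by
    rwa [Submodule.Quotient.mk_smul, Submodule.Quotient.mk_smul]
  rw [Submodule.Quotient.eq, hI] at hxy'
  rw [Submodule.Quotient.eq, hI]
  have : r • a - r • b = r * (a - b) := by simp [smul_eq_mul, mul_sub]
  rw [this] at hxy'
  exact h _ hxy'

lemma aux_pullback {R S : Type*} [CommRing R] [CommRing S] (e : R ≃+* S)
    (T : Set R) (r g : R) (I : Ideal S)
    (hT : Ideal.map (e : R →+* S) (Ideal.span T) = I)
    (key : ∀ q, e r * q ∈ I → q ∈ I)
    (h : r * g ∈ Ideal.span T) : g ∈ Ideal.span T := by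
  have h1 : e r * e g ∈ I := by
    rw [← hT, ← map_mul]; exact Ideal.mem_map_of_mem _ h
  have h2 := key _ h1
  have h3 := Ideal.mem_map_of_mem (e.symm : S →+* R) h2
  rw [← hT, Ideal.map_map] at h3
  have hcomp : (e.symm : S →+* R).comp (e : R →+* S) = RingHom.id R := by
    ext x; simp
  rw [hcomp, Ideal.map_id] at h3
  simpa using h3

end Helpers

section Equivs

noncomputable def ee (k : Fin 4) : MvPolynomial (Fin 4) ℤ ≃+* Polynomial (MvPolynomial (Fin 3) ℤ) :=
  ((renameEquiv ℤ (Equiv.swap 0 k)).trans (finSuccEquiv ℤ 3)).toRingEquiv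

lemma ee_C (k : Fin 4) (a : ℤ) : ee k (C a) = Polynomial.C (C a) := by
  simp [ee, algebraMap_eq]

lemma fse1 : finSuccEquiv ℤ 3 (X 1) = Polynomial.C (X 0) := by
  rw [show (1 : Fin 4) = Fin.succ 0 from rfl, finSuccEquiv_X_succ]
lemma fse2 : finSuccEquiv ℤ 3 (X 2) = Polynomial.C (X 1) := by
  rw [show (2 : Fin 4) = Fin.succ 1 from rfl, finSuccEquiv_X_succ]
lemma fse3 : finSuccEquiv ℤ 3 (X 3) = Polynomial.C (X 2) := by
  rw [show (3 : Fin 4) = Fin.succ 2 from rfl, finSuccEquiv_X_succ]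

lemma ee_X (k j : Fin 4) : ee k (X j) = finSuccEquiv ℤ 3 (X (Equiv.swap 0 k j)) := by
  simp [ee]

lemma ee1_X0 : ee 1 (X 0) = Polynomial.C (X 0) := by
  rw [ee_X, Equiv.swap_apply_left, fse1]
lemma ee1_X1 : ee 1 (X 1) = Polynomial.X := by
  rw [ee_X, Equiv.swap_apply_right, finSuccEquiv_X_zero]
lemma ee2_X0 : ee 2 (X 0) = Polynomial.C (X 1) := by
  rw [ee_X, Equiv.swap_apply_left, fse2]
lemma ee2_X1 : ee 2 (X 1) = Polynomial.C (X 0) := by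
  rw [ee_X, Equiv.swap_apply_of_ne_of_ne (by decide) (by decide), fse1]
lemma ee2_X2 : ee 2 (X 2) = Polynomial.X := by
  rw [ee_X, Equiv.swap_apply_right, finSuccEquiv_X_zero]
lemma ee3_X0 : ee 3 (X 0) = Polynomial.C (X 2) := by
  rw [ee_X, Equiv.swap_apply_left, fse3]
lemma ee3_X1 : ee 3 (X 1) = Polynomial.C (X 0) := by
  rw [ee_X, Equiv.swap_apply_of_ne_of_ne (by decide) (by decide), fse1]
lemma ee3_X2 : ee 3 (X 2) = Polynomial.C (X 1) := by
  rw [ee_X, Equiv.swap_apply_of_ne_of_ne (by decide) (by decide), fse2]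
lemma ee3_X3 : ee 3 (X 3) = Polynomial.X := by
  rw [ee_X, Equiv.swap_apply_right, finSuccEquiv_X_zero]

end Equivs

section Keys

variable (a₂₁ a₃₁ a₃₂ a₄₁ a₄₂ a₄₃ : ℤ)

local notation "R4" => MvPolynomial (Fin 4) ℤ

lemma key0 (g : R4) (h : (X 0 : R4) ^ 2 * g ∈ Ideal.span (∅ : Set R4)) :
    g ∈ Ideal.span (∅ : Set R4) := by
  rw [Ideal.span_empty, Ideal.mem_bot] at h ⊢
  rcases mul_eq_zero.mp h with h' | h'
  · exact absurd h' (pow_ne_zero _ (X_ne_zero 0))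
  · exact h'

lemma key1 (g : R4)
    (h : X 1 * (C a₂₁ * X 0 + X 1) * g ∈ Ideal.span {(X 0 : R4) ^ 2}) :
    g ∈ Ideal.span {(X 0 : R4) ^ 2} := by
  refine aux_pullback (ee 1) _ _ g
    (Ideal.map (Polynomial.C : _ →+* Polynomial (MvPolynomial (Fin 3) ℤ))
      (Ideal.span {(X 0 : MvPolynomial (Fin 3) ℤ) ^ 2})) ?_ ?_ h
  · rw [Ideal.map_span, Ideal.map_span]
    congr 1
    simp only [RingEquiv.coe_toRingHom, RingHom.coe_coe, Set.image_insert_eq,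
      Set.image_singleton, map_pow, map_mul, map_add, ee_C, ee1_X0, ee1_X1,
      Polynomial.C_pow, Polynomial.C_mul, Polynomial.C_add]
  · intro q hq
    refine aux_monic_mem_map_C _ ?_ hq
    have : ee 1 (X 1 * (C a₂₁ * X 0 + X 1))
        = Polynomial.X * (Polynomial.X + Polynomial.C (C a₂₁ * X 0)) := by
      simp only [map_mul, map_add, ee_C, ee1_X0, ee1_X1, Polynomial.C_mul]
      ring
    rw [this]
    exact Polynomial.monic_X.mul (Polynomial.monic_X_add_C _)

lemma key2 (g : R4)
    (h : X 2 * (C a₃₁ * X 0 + C a₃₂ * X 1 + X 2) * g ∈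
      Ideal.span {(X 0 : R4) ^ 2, X 1 * (C a₂₁ * X 0 + X 1)}) :
    g ∈ Ideal.span {(X 0 : R4) ^ 2, X 1 * (C a₂₁ * X 0 + X 1)} := by
  refine aux_pullback (ee 2) _ _ g
    (Ideal.map (Polynomial.C : _ →+* Polynomial (MvPolynomial (Fin 3) ℤ))
      (Ideal.span {(X 1 : MvPolynomial (Fin 3) ℤ) ^ 2, X 0 * (C a₂₁ * X 1 + X 0)})) ?_ ?_ h
  · rw [Ideal.map_span, Ideal.map_span]
    congr 1
    simp only [RingEquiv.coe_toRingHom, RingHom.coe_coe, Set.image_insert_eq,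
      Set.image_singleton, map_pow, map_mul, map_add, ee_C, ee2_X0, ee2_X1,
      Polynomial.C_pow, Polynomial.C_mul, Polynomial.C_add]
  · intro q hq
    refine aux_monic_mem_map_C _ ?_ hq
    have : ee 2 (X 2 * (C a₃₁ * X 0 + C a₃₂ * X 1 + X 2))
        = Polynomial.X * (Polynomial.X + Polynomial.C (C a₃₁ * X 1 + C a₃₂ * X 0)) := by
      simp only [map_mul, map_add, ee_C, ee2_X0, ee2_X1, ee2_X2, Polynomial.C_mul,
        Polynomial.C_add]
      ring
    rw [this]
    exact Polynomial.monic_X.mul (Polynomial.monic_X_add_C _)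

lemma key3 (g : R4)
    (h : X 3 * (C a₄₁ * X 0 + C a₄₂ * X 1 + C a₄₃ * X 2 + X 3) * g ∈
      Ideal.span {(X 0 : R4) ^ 2, X 1 * (C a₂₁ * X 0 + X 1),
        X 2 * (C a₃₁ * X 0 + C a₃₂ * X 1 + X 2)}) :
    g ∈ Ideal.span {(X 0 : R4) ^ 2, X 1 * (C a₂₁ * X 0 + X 1),
        X 2 * (C a₃₁ * X 0 + C a₃₂ * X 1 + X 2)} := by
  refine aux_pullback (ee 3) _ _ g
    (Ideal.map (Polynomial.C : _ →+* Polynomial (MvPolynomial (Fin 3) ℤ))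
      (Ideal.span {(X 2 : MvPolynomial (Fin 3) ℤ) ^ 2, X 0 * (C a₂₁ * X 2 + X 0),
        X 1 * (C a₃₁ * X 2 + C a₃₂ * X 0 + X 1)})) ?_ ?_ h
  · rw [Ideal.map_span, Ideal.map_span]
    congr 1
    simp only [RingEquiv.coe_toRingHom, RingHom.coe_coe, Set.image_insert_eq,
      Set.image_singleton, map_pow, map_mul, map_add, ee_C, ee3_X0, ee3_X1, ee3_X2,
      Polynomial.C_pow, Polynomial.C_mul, Polynomial.C_add]
  · intro q hq
    refine aux_monic_mem_map_C _ ?_ hq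
    have : ee 3 (X 3 * (C a₄₁ * X 0 + C a₄₂ * X 1 + C a₄₃ * X 2 + X 3))
        = Polynomial.X * (Polynomial.X
            + Polynomial.C (C a₄₁ * X 2 + C a₄₂ * X 0 + C a₄₃ * X 1)) := by
      simp only [map_mul, map_add, ee_C, ee3_X0, ee3_X1, ee3_X2, ee3_X3, Polynomial.C_mul,
        Polynomial.C_add]
      ring
    rw [this]
    exact Polynomial.monic_X.mul (Polynomial.monic_X_add_C _)

end Keys

/-- For any integers `a₂₁, a₃₁, a₃₂, a₄₁, a₄₂, a₄₃`, the polynomials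
`x₁²`, `x₂(a₂₁x₁+x₂)`, `x₃(a₃₁x₁+a₃₂x₂+x₃)`, `x₄(a₄₁x₁+a₄₂x₂+a₄₃x₃+x₄)`
form a regular sequence in `ℤ[x₁,x₂,x₃,x₄]`. -/
theorem stmt_12 (a₂₁ a₃₁ a₃₂ a₄₁ a₄₂ a₄₃ : ℤ) :
    RingTheory.Sequence.IsRegular (MvPolynomial (Fin 4) ℤ)
      [(X 0 : MvPolynomial (Fin 4) ℤ) ^ 2,
        X 1 * (C a₂₁ * X 0 + X 1),
        X 2 * (C a₃₁ * X 0 + C a₃₂ * X 1 + X 2),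
        X 3 * (C a₄₁ * X 0 + C a₄₂ * X 1 + C a₄₃ * X 2 + X 3)] := by
  set f0 : MvPolynomial (Fin 4) ℤ := (X 0 : MvPolynomial (Fin 4) ℤ) ^ 2 with hf0
  set f1 : MvPolynomial (Fin 4) ℤ := X 1 * (C a₂₁ * X 0 + X 1) with hf1
  set f2 : MvPolynomial (Fin 4) ℤ := X 2 * (C a₃₁ * X 0 + C a₃₂ * X 1 + X 2) with hf2
  set f3 : MvPolynomial (Fin 4) ℤ := X 3 * (C a₄₁ * X 0 + C a₄₂ * X 1 + C a₄₃ * X 2 + X 3)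
    with hf3
  have hs0 : {r | r ∈ ([] : List (MvPolynomial (Fin 4) ℤ))} = (∅ : Set _) := by ext r; simp
  have hs1 : {r | r ∈ [f0]} = ({f0} : Set _) := by ext r; simp
  have hs2 : {r | r ∈ [f0, f1]} = ({f0, f1} : Set _) := by ext r; simp
  have hs3 : {r | r ∈ [f0, f1, f2]} = ({f0, f1, f2} : Set _) := by ext r; simp
  rw [RingTheory.Sequence.isRegular_iff]
  constructor
  · rw [RingTheory.Sequence.isWeaklyRegular_iff]
    intro i hi
    simp only [List.length_cons, List.length_nil] at hi
    interval_cases i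
    · refine aux_smul_reg_of_mul_mem (Ideal.ofList []) _ (fun g hg => ?_)
      rw [Ideal.ofList, hs0] at hg ⊢
      exact key0 g hg
    · refine aux_smul_reg_of_mul_mem (Ideal.ofList [f0]) _ (fun g hg => ?_)
      rw [Ideal.ofList, hs1] at hg ⊢
      exact key1 a₂₁ g hg
    · refine aux_smul_reg_of_mul_mem (Ideal.ofList [f0, f1]) _ (fun g hg => ?_)
      rw [Ideal.ofList, hs2] at hg ⊢
      exact key2 a₂₁ a₃₁ a₃₂ g hg
    · refine aux_smul_reg_of_mul_mem (Ideal.ofList [f0, f1, f2]) _ (fun g hg => ?_)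
      rw [Ideal.ofList, hs3] at hg ⊢
      exact key3 a₂₁ a₃₁ a₃₂ a₄₁ a₄₂ a₄₃ g hg
  · intro htop
    rw [Ideal.smul_eq_mul, Ideal.mul_top] at htop
    have h1 : (1 : MvPolynomial (Fin 4) ℤ) ∈ Ideal.ofList [f0, f1, f2, f3] := by
      rw [← htop]; trivial
    have hs4 : {r | r ∈ [f0, f1, f2, f3]} = ({f0, f1, f2, f3} : Set _) := by ext r; simp
    rw [Ideal.ofList, hs4] at h1
    have h2 := Ideal.mem_map_of_mem (MvPolynomial.eval (fun _ => (0 : ℤ))) h1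
    rw [Ideal.map_span] at h2
    simp [hf0, hf1, hf2, hf3, Set.image_insert_eq] at h2
end

section
/- Let k be a field of characteristic zero, and let x₁, x₂, x₃ be the variables of the polynomial ring k[x₁,x₂,x₃]. If α, β, γ ∈ k are such that the square (αx₁ + βx₂ + γx₃)² lies in the k-linear span of the three quadrics x₁², x₂², and x₃² − x₁x₂, then γ = 0 and αβ = 0. (Hence x₁² and x₂² are, up to scalars, the only squares of linear forms in this span.) -/
open MvPolynomial

/-- Over a field `k` of characteristic zero, if the square of the linear form
`αx₁ + βx₂ + γx₃` lies in the span of `x₁², x₂², x₃² − x₁x₂`, then `γ = 0` and `αβ = 0`: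
up to scalars, `x₁²` and `x₂²` are the only squares of linear forms in this span. -/
theorem stmt_14 (k : Type*) [Field k] [CharZero k] (α β γ : k)
    (h : (C α * X 0 + C β * X 1 + C γ * X 2 : MvPolynomial (Fin 3) k) ^ 2 ∈
      Submodule.span k
        ({(X 0 : MvPolynomial (Fin 3) k) ^ 2, X 1 ^ 2, X 2 ^ 2 - X 0 * X 1} :
          Set (MvPolynomial (Fin 3) k))) :
    γ = 0 ∧ α * β = 0 := by
  rw [Submodule.mem_span_insert] at h
  obtain ⟨a, p, hp, heq⟩ := h
  rw [Submodule.mem_span_insert] at hp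
  obtain ⟨b, q, hq, heqq⟩ := hp
  rw [Submodule.mem_span_singleton] at hq
  obtain ⟨c, rfl⟩ := hq
  subst heqq
  -- evaluate the identity at a point
  have key : ∀ s t u : k, (α * s + β * t + γ * u) ^ 2
      = a * s ^ 2 + (b * t ^ 2 + c * (u ^ 2 - s * t)) := by
    intro s t u
    have := congrArg (eval (fun i : Fin 3 => ![s, t, u] i)) heq
    simpa [smul_eq_C_mul, mul_comm] using this
  have h1 := key 1 0 0
  have h2 := key 0 1 0
  have h3 := key 0 0 1
  have h4 := key 1 1 0
  have h5 := key 1 0 1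
  have h6 := key 0 1 1
  simp only [mul_one, mul_zero, add_zero, zero_add, one_pow, zero_pow, sub_zero,
    zero_sub, mul_neg] at h1 h2 h3 h4 h5 h6
  -- h1 : α² = a, h2 : β² = b, h3 : γ² = c
  -- h4 : (α+β)² = a + (b - c), h5 : (α+γ)² = a + c, h6 : (β+γ)² = b + c
  have hag : α * γ = 0 := by
    have h2' : (2:k) * (α * γ) = 0 := by linear_combination h5 - h1 - h3
    have := mul_eq_zero.mp h2'
    simpa using this
  have hbg : β * γ = 0 := by
    have h2' : (2:k) * (β * γ) = 0 := by linear_combination h6 - h2 - h3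
    have := mul_eq_zero.mp h2'
    simpa using this
  have h2ab : (2:k) * (α * β) = -c := by linear_combination h4 - h1 - h2
  have hg : γ = 0 := by
    by_contra hγ
    have hα : α = 0 := by
      rcases mul_eq_zero.mp hag with h | h
      · exact h
      · exact absurd h hγ
    have hβ : β = 0 := by
      rcases mul_eq_zero.mp hbg with h | h
      · exact h
      · exact absurd h hγ
    have hc : c = 0 := by
      rw [hα, hβ] at h2ab; simpa using h2ab.symm
    have : γ ^ 2 = 0 := by linear_combination h3 + hc
    exact hγ (pow_eq_zero_iff (n := 2) (by norm_num) |>.mp this)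
  refine ⟨hg, ?_⟩
  have hc : c = 0 := by
    have := h3; rw [hg] at this; simpa using this.symm
  have : (2:k) * (α * β) = 0 := by rw [h2ab, hc, neg_zero]
  rcases mul_eq_zero.mp this with h | h
  · exact absurd h two_ne_zero
  · exact h
end

section
/- Let k be a field of characteristic zero, let a, b, c ∈ k be nonzero, and suppose a linear form ℓ = αx₁ + βx₂ + γx₃ in k[x₁,x₂,x₃] satisfies ℓ² = s₄·[(ax₁ + bx₂ + cx₃)² − x₁x₂] + s₁x₁² + s₂x₂² + s₃(x₃² − x₁x₂) for some s₁, s₂, s₃, s₄ ∈ k with s₄ ≠ 0. Then there exist e ∈ k with e ≠ 0 and t ∈ k such that ℓ = e·(ax₁ + bx₂ + tx₃). -/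
open MvPolynomial

/-- Over a field `k` of characteristic zero with `a, b, c ∈ k` nonzero: if the square of
a linear form `ℓ = αx₁ + βx₂ + γx₃` equals
`s₄[(ax₁+bx₂+cx₃)² − x₁x₂] + s₁x₁² + s₂x₂² + s₃(x₃² − x₁x₂)` with `s₄ ≠ 0`, then
`ℓ = e(ax₁ + bx₂ + tx₃)` for some nonzero `e ∈ k` and some `t ∈ k`. -/
theorem stmt_16 (k : Type*) [Field k] [CharZero k] (a b c : k)
    (ha : a ≠ 0) (hb : b ≠ 0) (hc : c ≠ 0) (α β γ s₁ s₂ s₃ s₄ : k) (hs₄ : s₄ ≠ 0)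
    (h : (C α * X 0 + C β * X 1 + C γ * X 2 : MvPolynomial (Fin 3) k) ^ 2 =
      C s₄ * ((C a * X 0 + C b * X 1 + C c * X 2) ^ 2 - X 0 * X 1)
        + C s₁ * X 0 ^ 2 + C s₂ * X 1 ^ 2 + C s₃ * (X 2 ^ 2 - X 0 * X 1)) :
    ∃ e t : k, e ≠ 0 ∧
      (C α * X 0 + C β * X 1 + C γ * X 2 : MvPolynomial (Fin 3) k) =
        C e * (C a * X 0 + C b * X 1 + C t * X 2) := by
  have h1 := congrArg (eval (![1,0,0] : Fin 3 → k)) h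
  have h2 := congrArg (eval (![0,0,1] : Fin 3 → k)) h
  have h3 := congrArg (eval (![1,0,1] : Fin 3 → k)) h
  have h4 := congrArg (eval (![0,1,0] : Fin 3 → k)) h
  have h5 := congrArg (eval (![0,1,1] : Fin 3 → k)) h
  simp at h1 h2 h3 h4 h5
  have hac : α * γ = s₄ * (a * c) := by linear_combination (h3 - h1 - h2) / 2
  have hbc : β * γ = s₄ * (b * c) := by linear_combination (h5 - h4 - h2) / 2
  have hγ : γ ≠ 0 := by
    intro hg
    apply hs₄
    have : s₄ * (a * c) = 0 := by rw [← hac, hg]; ring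
    rcases mul_eq_zero.mp this with h' | h'
    · exact h'
    · exact absurd h' (mul_ne_zero ha hc)
  set e := s₄ * c / γ with he
  have he0 : e ≠ 0 := div_ne_zero (mul_ne_zero hs₄ hc) hγ
  refine ⟨e, γ ^ 2 / (s₄ * c), he0, ?_⟩
  have hα : α = e * a := by
    rw [he]; field_simp; linear_combination hac
  have hβ : β = e * b := by
    rw [he]; field_simp; linear_combination hbc
  have hγ' : γ = e * (γ ^ 2 / (s₄ * c)) := by
    rw [he]; field_simp
  calc (C α * X 0 + C β * X 1 + C γ * X 2 : MvPolynomial (Fin 3) k)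
      = C (e * a) * X 0 + C (e * b) * X 1 + C (e * (γ ^ 2 / (s₄ * c))) * X 2 := by
        rw [← hα, ← hβ, ← hγ']
    _ = C e * (C a * X 0 + C b * X 1 + C (γ ^ 2 / (s₄ * c)) * X 2) := by
        rw [C_mul, C_mul, C_mul]; ring
end

section
/- Let k be a field of characteristic zero, let a, b, c ∈ k be nonzero, and let t ∈ k. Then the square (ax₁ + bx₂ + tx₃)² lies in the k-linear span of the four quadrics x₁², x₂², x₃² − x₁x₂, and (ax₁ + bx₂ + cx₃)² − x₁x₂ in k[x₁,x₂,x₃] if and only if t² + ((1 − c² − 2ab)/c)·t + 2ab = 0. -/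
open MvPolynomial

set_option maxHeartbeats 1000000

/-- Over a field `k` of characteristic zero with `a, b, c ∈ k` nonzero and `t ∈ k`:
`(ax₁ + bx₂ + tx₃)²` lies in the span of
`x₁², x₂², x₃² − x₁x₂, (ax₁+bx₂+cx₃)² − x₁x₂` if and only if
`t² + ((1 − c² − 2ab)/c)t + 2ab = 0`. -/
theorem stmt_17 (k : Type*) [Field k] [CharZero k] (a b c t : k)
    (ha : a ≠ 0) (hb : b ≠ 0) (hc : c ≠ 0) :
    ((C a * X 0 + C b * X 1 + C t * X 2 : MvPolynomial (Fin 3) k) ^ 2 ∈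
      Submodule.span k
        ({(X 0 : MvPolynomial (Fin 3) k) ^ 2, X 1 ^ 2, X 2 ^ 2 - X 0 * X 1,
          (C a * X 0 + C b * X 1 + C c * X 2) ^ 2 - X 0 * X 1} :
          Set (MvPolynomial (Fin 3) k))) ↔
    t ^ 2 + ((1 - c ^ 2 - 2 * a * b) / c) * t + 2 * a * b = 0 := by
  constructor
  · intro h
    simp only [Submodule.mem_span_insert, Submodule.mem_span_singleton] at h
    obtain ⟨α, _, ⟨β, _, ⟨γ, _, ⟨δ, rfl⟩, rfl⟩, rfl⟩, hEq⟩ := h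
    have e1 := congrArg (eval ![1,0,0]) hEq
    have e2 := congrArg (eval ![0,1,0]) hEq
    have e3 := congrArg (eval ![0,0,1]) hEq
    have e4 := congrArg (eval ![1,1,0]) hEq
    have e5 := congrArg (eval ![1,0,1]) hEq
    simp [smul_eq_C_mul] at e1 e2 e3 e4 e5
    have h6 : t = δ * c := by
      have h2a : (2 : k) * a ≠ 0 := mul_ne_zero two_ne_zero ha
      exact mul_left_cancel₀ h2a (by linear_combination e5 - e1 - e3)
    field_simp
    linear_combination c * e3 + c * (e4 - e1 - e2) + (1 - c ^ 2 - 2 * a * b) * h6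
  · intro h
    set u : k := t / c with hu
    have huc : u * c = t := div_mul_cancel₀ t hc
    have r : 2 * a * b + (t ^ 2 - t * c) - u * (2 * a * b - 1) = 0 := by
      have h' : t ^ 2 * c + (1 - c ^ 2 - 2 * a * b) * t + 2 * a * b * c = 0 := by
        field_simp at h; linear_combination h
      rw [hu]; field_simp; linear_combination h'
    have hC1 : (C u * C c : MvPolynomial (Fin 3) k) = C t := by rw [← C_mul, huc]
    have hC2 := congrArg (C : k → MvPolynomial (Fin 3) k) r
    simp only [map_add, map_sub, map_mul, map_pow, map_ofNat, map_one, map_zero] at hC2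
    have key : (C a * X 0 + C b * X 1 + C t * X 2 : MvPolynomial (Fin 3) k) ^ 2 =
        (a ^ 2 - u * a ^ 2) • ((X 0 : MvPolynomial (Fin 3) k) ^ 2) +
        ((b ^ 2 - u * b ^ 2) • ((X 1 : MvPolynomial (Fin 3) k) ^ 2) +
        ((t ^ 2 - t * c) • ((X 2 : MvPolynomial (Fin 3) k) ^ 2 - X 0 * X 1) +
        u • ((C a * X 0 + C b * X 1 + C c * X 2) ^ 2 - X 0 * X 1))) := by
      simp only [smul_eq_C_mul, map_sub, map_mul, map_pow]
      linear_combination (-(C c * X 2 ^ 2 + 2 * C a * X 0 * X 2 + 2 * C b * X 1 * X 2)) * hC1 +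
        (X 0 * X 1) * hC2
    rw [key]
    refine Submodule.add_mem _ (Submodule.smul_mem _ _ (Submodule.subset_span (by simp)))
      (Submodule.add_mem _ (Submodule.smul_mem _ _ (Submodule.subset_span (by simp)))
      (Submodule.add_mem _ (Submodule.smul_mem _ _ (Submodule.subset_span (by simp)))
      (Submodule.smul_mem _ _ (Submodule.subset_span (by simp)))))
end
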